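/- arXiv:1404.1310 — 12 statements merged into one kernel-verified Lean document; each statement's English description precedes it below -/
import Mathlib

section
/- If $\Sigma: [0,a) \to \mathbb{R}^{n\times n}$ takes values in symmetric positive definite matrices, the limit $\Sigma^{-1}(a-) := \lim_{\rho \to a} \Sigma^{-1}(\rho)$ exists, and the kernel of $\Sigma^{-1}(a-)$ is spanned by a normalized vector $e$, then $\lambda_n^{-1}(\Sigma(\rho)) \Sigma(\rho) \to e e'$ as $\rho \to a$, where $\lambda_n(\Sigma(\rho))$ denotes the largest eigenvalue of $\Sigma(\rho)$. -/
open Matrix Filter Set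

/-!
Put `A = Σ⁻¹`. On invertible matrices `adj A = det A • A⁻¹`, so `adj A(ρ) = det A(ρ) • Σ(ρ)` is a
positive multiple of `Σ(ρ)`, and by continuity of the adjugate it tends to `adj S`. As `S` is
symmetric with kernel spanned by `e`, the identities `S * adj S = adj S * S = det S • 1 = 0` force
`adj S = c • e eᵀ`, and `c ≠ 0` by Cramer's rule: the `i`-th entry of `adj S *ᵥ e` is the
determinant of `S` with its `i`-th column replaced by `e`, which is invertible when `e i ≠ 0`.
Finally, dividing a positive semidefinite `T` by its top eigenvalue is continuous at `c • e eᵀ`,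
because `eᵀ T e ≤ λₙ(T) ≤ tr T` and both bounds tend to `c`.
-/

namespace Matrix

variable {n : Type*} [Fintype n] [DecidableEq n]

lemma setOf_mulVec_eq_smul_eq_spectrum {K : Type*} [Field K] (B : Matrix n n K) :
    {t : K | ∃ v ≠ 0, B *ᵥ v = t • v} = spectrum K B := by
  ext t
  rw [mem_ofPred_eq, spectrum.mem_iff, Algebra.algebraMap_eq_smul_one, isUnit_iff_isUnit_det,
    isUnit_iff_ne_zero, not_not, ← exists_mulVec_eq_zero_iff]
  simp only [sub_mulVec, smul_mulVec, one_mulVec, sub_eq_zero, eq_comm]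

section Spectrum

variable {B : Matrix n n ℝ} {L : ℝ}

lemma IsHermitian.dotProduct_mulVec_le (hB : B.IsHermitian) (hL : ∀ t ∈ spectrum ℝ B, t ≤ L)
    (v : n → ℝ) : v ⬝ᵥ B *ᵥ v ≤ L * (v ⬝ᵥ v) := by
  have hle : (L • (1 : Matrix n n ℝ) - B).PosSemidef := by
    open scoped MatrixOrder in
    have := le_algebraMap_of_spectrum_le hL hB.isSelfAdjoint
    rwa [Algebra.algebraMap_eq_smul_one, Matrix.le_iff] at this
  have := hle.dotProduct_mulVec_nonneg v
  simp only [sub_mulVec, smul_mulVec, one_mulVec, dotProduct_sub, dotProduct_smul, smul_eq_mul,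
    star_trivial] at this
  linarith

lemma PosSemidef.le_trace_of_mem_spectrum (hB : B.PosSemidef) (hL : L ∈ spectrum ℝ B) :
    L ≤ B.trace := by
  obtain ⟨i, rfl⟩ : L ∈ range hB.1.eigenvalues := hB.1.spectrum_real_eq_range_eigenvalues ▸ hL
  rw [hB.1.trace_eq_sum_eigenvalues]
  exact Finset.single_le_sum (fun j _ => hB.eigenvalues_nonneg j) (Finset.mem_univ i)

lemma isGreatest_spectrum_smul {d : ℝ} (hd : 0 < d) (hL : IsGreatest (spectrum ℝ B) L) :
    IsGreatest (spectrum ℝ (d • B)) (d * L) := by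
  have hBd : d • B = Units.mk0 d hd.ne' • B := rfl
  rw [hBd, spectrum.unit_smul_eq_smul, ← Set.image_smul]
  exact (monotone_mul_left_of_nonneg hd.le).map_isGreatest hL

end Spectrum

lemma adjugate_inv_eq_det_smul {K : Type*} [Field K] {B : Matrix n n K} (hB : B.det ≠ 0) :
    adjugate B⁻¹ = B⁻¹.det • B := by
  have hB' : B⁻¹.det ≠ 0 := by rw [det_nonsing_inv, Ring.inverse_eq_inv]; exact inv_ne_zero hB
  conv_lhs => rw [← one_smul K (adjugate B⁻¹), ← mul_inv_cancel₀ hB', mul_smul,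
    ← Ring.inverse_eq_inv, ← Matrix.inv_def, nonsing_inv_nonsing_inv B (isUnit_iff_ne_zero.2 hB)]

lemma updateCol_mulVec_of_apply_eq_zero {R : Type*} [CommRing R] (M : Matrix n n R) (i : n)
    (b : n → R) {x : n → R} (hx : x i = 0) : M.updateCol i b *ᵥ x = M *ᵥ x := by
  ext k
  refine Finset.sum_congr rfl fun j _ => ?_
  by_cases hj : j = i
  · subst hj; simp [hx]
  · simp [updateCol_ne hj]

section KernelSpannedBy

variable {K : Type*} [Field K] {S : Matrix n n K} {e : n → K}

omit [DecidableEq n] in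
lemma eq_dotProduct_smul_of_mulVec_eq_zero (he : e ⬝ᵥ e = 1)
    (hker : ∀ v, S *ᵥ v = 0 ↔ ∃ t : K, v = t • e) {x : n → K} (hx : S *ᵥ x = 0) :
    x = (e ⬝ᵥ x) • e := by
  obtain ⟨t, rfl⟩ := (hker x).1 hx
  rw [dotProduct_smul, he, smul_eq_mul, mul_one]

lemma det_updateCol_ne_zero (hS : Sᵀ = S) (he : e ⬝ᵥ e = 1)
    (hker : ∀ v, S *ᵥ v = 0 ↔ ∃ t : K, v = t • e) {i : n} (hi : e i ≠ 0) :
    (S.updateCol i e).det ≠ 0 := by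
  rw [Ne, ← exists_mulVec_eq_zero_iff]
  rintro ⟨x, hx0, hx⟩
  have heS : e ᵥ* S = 0 := by
    rw [← mulVec_transpose, hS, (hker e).2 ⟨1, (one_smul K e).symm⟩]
  have hxi : x i = 0 := by
    have := congrArg (e ⬝ᵥ ·) hx
    rw [dotProduct_mulVec, vecMul_updateCol, heS, he, ← Pi.single, single_dotProduct] at this
    simpa using this
  rw [updateCol_mulVec_of_apply_eq_zero S i e hxi] at hx
  obtain ⟨t, rfl⟩ := (hker x).1 hx
  have ht : t = 0 := by simpa [hi] using hxi
  exact hx0 (by rw [ht, zero_smul])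

lemma adjugate_eq_smul_vecMulVec (hS : Sᵀ = S) (he : e ⬝ᵥ e = 1)
    (hker : ∀ v, S *ᵥ v = 0 ↔ ∃ t : K, v = t • e) :
    adjugate S = (e ⬝ᵥ adjugate S *ᵥ e) • vecMulVec e e := by
  have hdet : S.det = 0 := by
    rw [← exists_mulVec_eq_zero_iff]
    exact ⟨e, fun h => by simp [h] at he, (hker e).2 ⟨1, (one_smul K e).symm⟩⟩
  have hcol : ∀ w, adjugate S *ᵥ w = (e ⬝ᵥ adjugate S *ᵥ w) • e := fun w =>
    eq_dotProduct_smul_of_mulVec_eq_zero he hker (by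
      rw [mulVec_mulVec, mul_adjugate, hdet, zero_smul, zero_mulVec])
  have hsymm : (adjugate S)ᵀ = adjugate S := by rw [adjugate_transpose, hS]
  refine ext_iff_mulVec.2 fun w => ?_
  rw [hcol w, smul_mulVec, vecMulVec_mulVec, dotProduct_mulVec, ← mulVec_transpose, hsymm,
    hcol e]
  simp [he, smul_smul, mul_comm]

lemma dotProduct_adjugate_mulVec_ne_zero (hS : Sᵀ = S) (he : e ⬝ᵥ e = 1)
    (hker : ∀ v, S *ᵥ v = 0 ↔ ∃ t : K, v = t • e) : e ⬝ᵥ adjugate S *ᵥ e ≠ 0 := by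
  obtain ⟨i, hi⟩ : ∃ i, e i ≠ 0 := by
    by_contra! h
    simp [show e = 0 from funext h] at he
  intro hc
  have := congrFun (cramer_eq_adjugate_mulVec S e) i
  rw [adjugate_eq_smul_vecMulVec hS he hker, hc, zero_smul, zero_mulVec, cramer_apply] at this
  exact det_updateCol_ne_zero hS he hker hi this

end KernelSpannedBy

theorem tendsto_inv_smul_of_isGreatest_spectrum {ι : Type*} {l : Filter ι}
    {T : ι → Matrix n n ℝ} {μ : ι → ℝ} {e : n → ℝ} {c : ℝ} (he : e ⬝ᵥ e = 1) (hc : c ≠ 0)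
    (hT : Tendsto T l (nhds (c • vecMulVec e e))) (hpsd : ∀ᶠ i in l, (T i).PosSemidef)
    (hμ : ∀ᶠ i in l, IsGreatest (spectrum ℝ (T i)) (μ i)) :
    Tendsto (fun i => (μ i)⁻¹ • T i) l (nhds (vecMulVec e e)) := by
  have hquad : Tendsto (fun i => e ⬝ᵥ T i *ᵥ e) l (nhds c) := by
    have hcont : Continuous fun M : Matrix n n ℝ => e ⬝ᵥ M *ᵥ e :=
      continuous_const.dotProduct (continuous_id.matrix_mulVec continuous_const)
    have hval : e ⬝ᵥ (c • vecMulVec e e) *ᵥ e = c := by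
      rw [smul_mulVec, vecMulVec_mulVec, he]
      simp [he]
    simpa [Function.comp_def, hval] using (hcont.tendsto _).comp hT
  have htrace : Tendsto (fun i => (T i).trace) l (nhds c) := by
    simpa [Function.comp_def, trace_vecMulVec, he] using
      (continuous_id.matrix_trace.tendsto _).comp hT
  have hμc : Tendsto μ l (nhds c) := by
    refine tendsto_of_tendsto_of_tendsto_of_le_of_le' hquad htrace ?_ ?_
    · filter_upwards [hpsd, hμ] with i hTi hμi
      simpa [he] using hTi.1.dotProduct_mulVec_le hμi.2 e
    · filter_upwards [hpsd, hμ] with i hTi hμi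
      exact hTi.le_trace_of_mem_spectrum hμi.1
  simpa [smul_smul, inv_mul_cancel₀ hc] using (hμc.inv₀ hc).smul hT

end Matrix

theorem stmt0_general {n : ℕ} (a : ℝ) (ha : 0 < a)
    (Sig : ℝ → Matrix (Fin n) (Fin n) ℝ)
    (hpd : ∀ ρ ∈ Set.Ico (0:ℝ) a, (Sig ρ).PosDef)
    (S : Matrix (Fin n) (Fin n) ℝ)
    (hlim : Tendsto (fun ρ => (Sig ρ)⁻¹) (nhdsWithin a (Set.Ico 0 a)) (nhds S))
    (e : Fin n → ℝ) (he : ∑ i, e i ^ 2 = 1)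
    (hker : ∀ v : Fin n → ℝ, S.mulVec v = 0 ↔ ∃ t : ℝ, v = t • e)
    (lam : ℝ → ℝ)
    (hlam : ∀ ρ ∈ Set.Ico (0:ℝ) a,
      IsGreatest {t : ℝ | ∃ v ≠ 0, (Sig ρ).mulVec v = t • v} (lam ρ)) :
    Tendsto (fun ρ => (lam ρ)⁻¹ • Sig ρ) (nhdsWithin a (Set.Ico 0 a))
      (nhds (Matrix.vecMulVec e e)) := by
  have := right_nhdsWithin_Ico_neBot ha
  have hev : ∀ᶠ ρ in nhdsWithin a (Ico 0 a), ρ ∈ Ico 0 a := self_mem_nhdsWithin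
  have he' : e ⬝ᵥ e = 1 := by simpa [dotProduct, sq] using he
  have hS : Sᵀ = S := (isClosed_eq continuous_id.matrix_transpose continuous_id).mem_of_tendsto
    hlim (hev.mono fun ρ hρ => by simpa using (hpd ρ hρ).inv.1.eq)
  have hdet : ∀ ρ ∈ Ico 0 a, 0 < (Sig ρ)⁻¹.det := fun ρ hρ => (hpd ρ hρ).inv.det_pos
  have hadj : ∀ ρ ∈ Ico 0 a, adjugate (Sig ρ)⁻¹ = (Sig ρ)⁻¹.det • Sig ρ := fun ρ hρ =>
    adjugate_inv_eq_det_smul (hpd ρ hρ).det_pos.ne'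
  have hT : Tendsto (fun ρ => adjugate (Sig ρ)⁻¹) (nhdsWithin a (Ico 0 a))
      (nhds ((e ⬝ᵥ adjugate S *ᵥ e) • vecMulVec e e)) :=
    adjugate_eq_smul_vecMulVec hS he' hker ▸ (continuous_id.matrix_adjugate.tendsto S).comp hlim
  have hnorm : Tendsto (fun ρ => ((Sig ρ)⁻¹.det * lam ρ)⁻¹ • adjugate (Sig ρ)⁻¹)
      (nhdsWithin a (Ico 0 a)) (nhds (vecMulVec e e)) :=
    tendsto_inv_smul_of_isGreatest_spectrum he' (dotProduct_adjugate_mulVec_ne_zero hS he' hker) hT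
    (hev.mono fun ρ hρ => hadj ρ hρ ▸ (hpd ρ hρ).posSemidef.smul (hdet ρ hρ).le)
    (hev.mono fun ρ hρ => hadj ρ hρ ▸ isGreatest_spectrum_smul (hdet ρ hρ)
      (setOf_mulVec_eq_smul_eq_spectrum (Sig ρ) ▸ hlam ρ hρ))
  refine hnorm.congr' (hev.mono fun ρ hρ => ?_)
  dsimp only
  rw [hadj ρ hρ, smul_smul, _root_.mul_inv_rev, mul_assoc, inv_mul_cancel₀ (hdet ρ hρ).ne', mul_one]

/-- If the inverse covariance matrices converge and the kernel of the limit is spanned by the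
normalized vector `e`, then the covariance matrices, scaled by their largest eigenvalue,
converge to `e eᵀ`. -/
theorem stmt0 {n : ℕ} (hn : 2 ≤ n) (a : ℝ) (ha : 0 < a)
    (Sig : ℝ → Matrix (Fin n) (Fin n) ℝ)
    (hpd : ∀ ρ ∈ Set.Ico (0:ℝ) a, (Sig ρ).PosDef)
    (S : Matrix (Fin n) (Fin n) ℝ)
    (hlim : Tendsto (fun ρ => (Sig ρ)⁻¹) (nhdsWithin a (Set.Ico 0 a)) (nhds S))
    (e : Fin n → ℝ) (he : ∑ i, e i ^ 2 = 1)
    (hker : ∀ v : Fin n → ℝ, S.mulVec v = 0 ↔ ∃ t : ℝ, v = t • e)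
    (lam : ℝ → ℝ)
    (hlam : ∀ ρ ∈ Set.Ico (0:ℝ) a,
      IsGreatest {t : ℝ | ∃ v ≠ 0, (Sig ρ).mulVec v = t • v} (lam ρ)) :
    Tendsto (fun ρ => (lam ρ)⁻¹ • Sig ρ) (nhdsWithin a (Set.Ico 0 a))
      (nhds (Matrix.vecMulVec e e)) :=
  stmt0_general a ha Sig hpd S hlim e he hker lam hlam
end

section
/- Let $\Phi \subseteq \mathbb{R}^n$ be a Borel set invariant under the group $G_X = \{y \mapsto \gamma y + X\theta : \gamma \in \mathbb{R} \setminus \{0\}, \theta \in \mathbb{R}^k\}$ and satisfying $\emptyset \neq \Phi \neq \mathbb{R}^n$. Then $\mathrm{span}(X) \subseteq \mathrm{bd}(\Phi)$, where $\mathrm{bd}$ denotes the topological boundary. -/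
open Filter Topology

/- Letting `γ → 0` in `γ • y + Xθ` shows that every point of `span(X)` is a limit of points of
`Φ`. The group is closed under inverses, so `Φᶜ` is invariant too and `span(X)` also lies in the
closure of `Φᶜ`; hence it lies in the frontier. -/

section

variable {𝕜 E : Type*}

theorem mem_closure_of_smul_add_mem [NontriviallyNormedField 𝕜] [AddCommGroup E] [Module 𝕜 E]
    [TopologicalSpace E] [ContinuousSMul 𝕜 E] [ContinuousAdd E] {S : Set E} (hS : S.Nonempty)
    {p : E} (hp : ∀ γ : 𝕜, γ ≠ 0 → ∀ y ∈ S, γ • y + p ∈ S) : p ∈ closure S := by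
  obtain ⟨y, hy⟩ := hS
  have hlim : Tendsto (fun γ : 𝕜 => γ • y + p) (𝓝[≠] 0) (𝓝 p) := by
    have hcont : Continuous fun γ : 𝕜 => γ • y + p := by fun_prop
    simpa using (hcont.tendsto 0).mono_left nhdsWithin_le_nhds
  exact mem_closure_of_tendsto hlim (eventually_nhdsWithin_of_forall fun γ hγ => hp γ hγ y hy)

theorem compl_smul_add_mem [DivisionRing 𝕜] [AddCommGroup E] [Module 𝕜 E] {F : Type*}
    [AddCommGroup F] [Module 𝕜 F] (f : F →ₗ[𝕜] E) {Φ : Set E}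
    (hΦ : ∀ γ : 𝕜, γ ≠ 0 → ∀ θ : F, ∀ y ∈ Φ, γ • y + f θ ∈ Φ) :
    ∀ γ : 𝕜, γ ≠ 0 → ∀ θ : F, ∀ y ∈ Φᶜ, γ • y + f θ ∈ Φᶜ := by
  intro γ hγ θ y hy hmem
  apply hy
  have hback : γ⁻¹ • (γ • y + f θ) + f (-γ⁻¹ • θ) = y := by
    rw [smul_add, smul_smul, inv_mul_cancel₀ hγ, one_smul, map_smul, neg_smul,
      add_neg_cancel_right]
  simpa only [hback] using hΦ γ⁻¹ (inv_ne_zero hγ) (-γ⁻¹ • θ) _ hmem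

end

theorem stmt2_general {n k : ℕ}
    (X : Matrix (Fin n) (Fin k) ℝ)
    (Φ : Set (Fin n → ℝ))
    (hinv : ∀ γ : ℝ, γ ≠ 0 → ∀ θ : Fin k → ℝ, ∀ y ∈ Φ, γ • y + X.mulVec θ ∈ Φ)
    (hne : Φ.Nonempty) (hne' : Φ ≠ Set.univ) :
    Set.range X.mulVec ⊆ frontier Φ := by
  rintro _ ⟨θ, rfl⟩
  have hcompl := compl_smul_add_mem X.mulVecLin hinv
  rw [frontier_eq_closure_inter_closure]
  exact ⟨mem_closure_of_smul_add_mem hne fun γ hγ y hy => hinv γ hγ θ y hy,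
    mem_closure_of_smul_add_mem (Set.nonempty_compl.mpr hne') fun γ hγ y hy => hcompl γ hγ θ y hy⟩

/-- A `G_X`-invariant rejection region `Φ` with `∅ ≠ Φ ≠ ℝⁿ` contains `span(X)` in its
topological boundary. -/
theorem stmt2 {n k : ℕ} (hn : 2 ≤ n) (hk : k < n)
    (X : Matrix (Fin n) (Fin k) ℝ)
    (Φ : Set (Fin n → ℝ)) (hmeas : MeasurableSet Φ)
    (hinv : ∀ γ : ℝ, γ ≠ 0 → ∀ θ : Fin k → ℝ, ∀ y ∈ Φ, γ • y + X.mulVec θ ∈ Φ)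
    (hne : Φ.Nonempty) (hne' : Φ ≠ Set.univ) :
    Set.range X.mulVec ⊆ frontier Φ :=
  stmt2_general X Φ hinv hne hne'
end

section
/- Let $C_X \in \mathbb{R}^{(n-k)\times n}$ satisfy $C_X C_X' = I_{n-k}$ and $C_X' C_X = \Pi_{\mathrm{span}(X)^{\perp}}$, let $B \in \mathbb{R}^{(n-k)\times(n-k)}$ be symmetric, and define $T_B(y) = y' C_X' B C_X y / \|C_X y\|^2$ for $y \notin \mathrm{span}(X)$ and $T_B(y) = \lambda_1(B)$ for $y \in \mathrm{span}(X)$. Let $\Phi_{B,\kappa} = \{y : T_B(y) > \kappa\}$. If $\emptyset \neq \Phi_{B,\kappa} \neq \mathbb{R}^n$, then $\mathrm{bd}(\Phi_{B,\kappa}) = \mathrm{span}(X) \cup \{y \in \mathbb{R}^n : T_B(y) = \kappa\}$. -/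
/-!
Clearing the denominator `‖C y‖² > 0`, the region `{T > κ}` is the positivity set of the quadratic
form `Q y = (C y)ᵀ (B - κ I) (C y)`: off `span X = ker C` the two differ by that positive factor,
and on `ker C` both vanish because `λ₁ ≤ κ` (the Rayleigh bound gives `T ≥ λ₁` everywhere, and the
region is not all of `ℝⁿ`). The frontier of the positivity set of a continuous quadratic form that
takes a positive value at `y₀` is its zero set: at a zero `y`,
`Q (y + t • z) = t * polar Q y z + t ^ 2 * Q z` is positive for small `t > 0` once `z = ±y₀` is
chosen to make the linear term nonnegative. Finally `{Q = 0} = ker C ∪ {T = κ}`.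
-/

open Matrix Set Filter Topology

namespace QuadraticMap

variable {E : Type*} [AddCommGroup E] [Module ℝ E] [TopologicalSpace E] [ContinuousAdd E]
  [ContinuousSMul ℝ E]

theorem mem_closure_setOf_pos_of_eq_zero (Q : QuadraticMap ℝ E ℝ) {y₀ y : E}
    (hy₀ : 0 < Q y₀) (hy : Q y = 0) : y ∈ closure {x | 0 < Q x} := by
  obtain ⟨z, hz, hpolar⟩ : ∃ z, Q z = Q y₀ ∧ 0 ≤ polar Q y z := by
    rcases le_total 0 (polar Q y y₀) with h | h
    · exact ⟨y₀, rfl, h⟩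
    · exact ⟨-y₀, Q.map_neg y₀, by rw [polar_neg_right]; linarith⟩
  have hray : ∀ t : ℝ, Q (y + t • z) = t * polar Q y z + t ^ 2 * Q z := by
    intro t
    calc Q (y + t • z) = polar Q y (t • z) + Q y + Q (t • z) := by rw [polar]; ring
      _ = t * polar Q y z + t ^ 2 * Q z := by
        rw [polar_smul_right, hy, Q.map_smul, smul_eq_mul, smul_eq_mul]; ring
  have hlim : Tendsto (fun t : ℝ => y + t • z) (𝓝[>] 0) (𝓝 y) := by
    have : Continuous fun t : ℝ => y + t • z := by fun_prop
    simpa using (this.tendsto 0).mono_left nhdsWithin_le_nhds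
  refine mem_closure_of_tendsto hlim ?_
  filter_upwards [self_mem_nhdsWithin] with t (ht : 0 < t)
  show 0 < Q (y + t • z)
  rw [hray, hz]
  positivity

theorem frontier_setOf_pos (Q : QuadraticMap ℝ E ℝ) (hQ : Continuous Q)
    (h : {x | 0 < Q x}.Nonempty) : frontier {x | 0 < Q x} = {x | Q x = 0} := by
  obtain ⟨y₀, hy₀⟩ := h
  ext y
  rw [(isOpen_lt continuous_const hQ).frontier_eq]
  constructor
  · rintro ⟨hcl, hpos⟩
    exact le_antisymm (not_lt.mp hpos) (closure_lt_subset_le continuous_const hQ hcl)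
  · intro hy
    exact ⟨Q.mem_closure_setOf_pos_of_eq_zero hy₀ hy, fun h => h.ne' hy⟩

end QuadraticMap

theorem Matrix.toQuadraticForm'_apply {m R : Type*} [Fintype m] [DecidableEq m] [CommRing R]
    (M : Matrix m m R) (x : m → R) : M.toQuadraticForm' x = x ⬝ᵥ M *ᵥ x :=
  toLinearMap₂'_apply' M x x

theorem Matrix.continuous_toQuadraticForm' {m : Type*} [Fintype m] [DecidableEq m]
    (M : Matrix m m ℝ) : Continuous M.toQuadraticForm' := by
  simp only [funext M.toQuadraticForm'_apply]
  exact continuous_id.dotProduct (continuous_const.matrix_mulVec continuous_id)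

theorem Matrix.dotProduct_sub_smul_one_mulVec {m R : Type*} [Fintype m] [DecidableEq m]
    [CommRing R] (A : Matrix m m R) (c : R) (x : m → R) :
    x ⬝ᵥ (A - c • 1) *ᵥ x = x ⬝ᵥ A *ᵥ x - c * (x ⬝ᵥ x) := by
  rw [sub_mulVec, smul_mulVec, one_mulVec, dotProduct_sub, dotProduct_smul, smul_eq_mul]

theorem Matrix.IsSymm.mul_dotProduct_self_le {m : Type*} [Fintype m] [DecidableEq m]
    {B : Matrix m m ℝ} (hB : B.IsSymm) {μ : ℝ}
    (hμ : μ ∈ lowerBounds {t : ℝ | ∃ v ≠ 0, B *ᵥ v = t • v}) (z : m → ℝ) :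
    μ * (z ⬝ᵥ z) ≤ z ⬝ᵥ B *ᵥ z := by
  have hH : (B - μ • 1).IsHermitian := by
    rw [IsHermitian, conjTranspose_eq_transpose_of_trivial]
    exact (hB.sub (isSymm_one.smul μ)).eq
  -- an eigenvector of `B - μ • 1` for `λ` is an eigenvector of `B` for `λ + μ`
  have hpsd : (B - μ • 1).PosSemidef := by
    refine hH.posSemidef_iff_eigenvalues_nonneg.mpr fun j => ?_
    set v := hH.eigenvectorBasis j
    have hv : v.ofLp ≠ 0 := fun h =>
      hH.eigenvectorBasis.toBasis.ne_zero j (by simpa using congrArg (WithLp.toLp 2) h)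
    have hBv : B *ᵥ v = (hH.eigenvalues j + μ) • v := by
      have := hH.mulVec_eigenvectorBasis j
      rw [sub_mulVec, smul_mulVec, one_mulVec] at this
      rw [add_smul, ← this]; abel
    have := hμ ⟨v, hv, hBv⟩
    show 0 ≤ hH.eigenvalues j
    linarith
  have := hpsd.dotProduct_mulVec_nonneg z
  rw [star_trivial, dotProduct_sub_smul_one_mulVec] at this
  linarith

theorem Matrix.dotProduct_transpose_mul_mul_mulVec {m n R : Type*} [Fintype m] [Fintype n]
    [CommSemiring R] (C : Matrix m n R) (A : Matrix m m R) (y : n → R) :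
    y ⬝ᵥ (Cᵀ * A * C) *ᵥ y = (C *ᵥ y) ⬝ᵥ A *ᵥ (C *ᵥ y) := by
  rw [← mulVec_mulVec, ← mulVec_mulVec, dotProduct_mulVec, vecMul_transpose]

theorem stmt4_general {n k : ℕ}
    (X : Matrix (Fin n) (Fin k) ℝ)
    (C : Matrix (Fin (n - k)) (Fin n) ℝ)
    (hC2 : ∀ v : Fin n → ℝ, (Cᵀ * C).mulVec v = 0 ↔ v ∈ Set.range X.mulVec)
    (B : Matrix (Fin (n - k)) (Fin (n - k)) ℝ) (hB : B.IsSymm)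
    (lam1 : ℝ) (hlam1 : IsLeast {t : ℝ | ∃ v ≠ 0, B.mulVec v = t • v} lam1)
    (T : (Fin n → ℝ) → ℝ)
    (hT1 : ∀ y ∉ Set.range X.mulVec,
      T y = (y ⬝ᵥ (Cᵀ * B * C).mulVec y) / (∑ i, (C.mulVec y) i ^ 2))
    (hT2 : ∀ y ∈ Set.range X.mulVec, T y = lam1)
    (κ : ℝ)
    (hne : {y : Fin n → ℝ | κ < T y}.Nonempty)
    (hne' : {y : Fin n → ℝ | κ < T y} ≠ Set.univ) :
    frontier {y : Fin n → ℝ | κ < T y}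
      = Set.range X.mulVec ∪ {y : Fin n → ℝ | T y = κ} := by
  set S := Set.range X.mulVec
  have hS : ∀ y, y ∈ S ↔ C *ᵥ y = 0 := fun y => (hC2 y).symm.trans <| by
    simpa [conjTranspose_eq_transpose_of_trivial] using conjTranspose_mul_self_mulVec_eq_zero C y
  have hnormSq : ∀ y ∉ S, 0 < (C *ᵥ y) ⬝ᵥ (C *ᵥ y) := fun y hy => by
    simpa using dotProduct_star_self_pos_iff.mpr (mt (hS y).mpr hy)
  have hT : ∀ y ∉ S, T y = (C *ᵥ y) ⬝ᵥ B *ᵥ (C *ᵥ y) / (C *ᵥ y) ⬝ᵥ (C *ᵥ y) := fun y hy => by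
    rw [hT1 y hy, dotProduct_transpose_mul_mul_mulVec]; simp [dotProduct, sq]
  set Q := (Cᵀ * (B - κ • 1) * C).toQuadraticForm'
  have hQ : ∀ y, Q y = (C *ᵥ y) ⬝ᵥ B *ᵥ (C *ᵥ y) - κ * ((C *ᵥ y) ⬝ᵥ (C *ᵥ y)) := fun y => by
    rw [toQuadraticForm'_apply, dotProduct_transpose_mul_mul_mulVec, dotProduct_sub_smul_one_mulVec]
  have hQS : ∀ y ∈ S, Q y = 0 := fun y hy => by simp [hQ, (hS y).mp hy]
  have hQT : ∀ y ∉ S, Q y = (C *ᵥ y) ⬝ᵥ (C *ᵥ y) * (T y - κ) := fun y hy => by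
    rw [hQ, hT y hy]; field_simp [(hnormSq y hy).ne']
  have hlamT : ∀ y, lam1 ≤ T y := fun y => by
    by_cases hy : y ∈ S
    · exact (hT2 y hy).ge
    · rw [hT y hy, le_div_iff₀ (hnormSq y hy)]
      exact hB.mul_dotProduct_self_le hlam1.2 _
  have hlamκ : lam1 ≤ κ := by
    obtain ⟨y, hy⟩ := (Set.ne_univ_iff_exists_notMem _).mp hne'
    exact (hlamT y).trans (not_lt.mp hy)
  have hpos : {y | κ < T y} = {y | 0 < Q y} := by
    ext y
    by_cases hy : y ∈ S
    · simp [hQS y hy, hT2 y hy, hlamκ]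
    · simp [hQT y hy, mul_pos_iff_of_pos_left (hnormSq y hy)]
  have hzero : {y | Q y = 0} = S ∪ {y | T y = κ} := by
    ext y
    by_cases hy : y ∈ S
    · simp [hQS y hy, hy]
    · simp [hQT y hy, (hnormSq y hy).ne', sub_eq_zero, hy]
  rw [hpos, Q.frontier_setOf_pos (continuous_toQuadraticForm' _) (hpos ▸ hne), hzero]

/-- For the test statistic `T_B` (a ratio of quadratic forms, set equal to `λ₁(B)` on `span(X)`),
the boundary of a nontrivial rejection region `{T_B > κ}` equals `span(X) ∪ {T_B = κ}`. -/
theorem stmt4 {n k : ℕ} (hn : 2 ≤ n) (hk : k < n)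
    (X : Matrix (Fin n) (Fin k) ℝ) (hX : X.rank = k)
    (C : Matrix (Fin (n - k)) (Fin n) ℝ)
    (hC1 : C * Cᵀ = 1)
    (hC2 : ∀ v : Fin n → ℝ, (Cᵀ * C).mulVec v = 0 ↔ v ∈ Set.range X.mulVec)
    (B : Matrix (Fin (n - k)) (Fin (n - k)) ℝ) (hB : B.IsSymm)
    (lam1 : ℝ) (hlam1 : IsLeast {t : ℝ | ∃ v ≠ 0, B.mulVec v = t • v} lam1)
    (T : (Fin n → ℝ) → ℝ)
    (hT1 : ∀ y ∉ Set.range X.mulVec,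
      T y = (y ⬝ᵥ (Cᵀ * B * C).mulVec y) / (∑ i, (C.mulVec y) i ^ 2))
    (hT2 : ∀ y ∈ Set.range X.mulVec, T y = lam1)
    (κ : ℝ)
    (hne : {y : Fin n → ℝ | κ < T y}.Nonempty)
    (hne' : {y : Fin n → ℝ | κ < T y} ≠ Set.univ) :
    frontier {y : Fin n → ℝ | κ < T y}
      = Set.range X.mulVec ∪ {y : Fin n → ℝ | T y = κ} :=
  stmt4_general X C hC2 B hB lam1 hlam1 T hT1 hT2 κ hne hne'
end

section
/- Let $c: [0,a) \to (0,\infty)$ and a normalized vector $e \in \mathbb{R}^n$ be given, and let $\Sigma(\cdot)$ take values in symmetric positive definite $n\times n$ matrices. Then there exists a square root $L_*(\cdot)$ of $\Sigma(\cdot)$ (i.e., $L_*(\rho) L_*(\rho)' = \Sigma(\rho)$) such that $\Lambda := \lim_{\rho \to a} c(\rho) \Pi_{\mathrm{span}(e)^{\perp}} L_*(\rho)$ exists and is injective on $\mathrm{span}(e)^{\perp}$, if and only if $V := \lim_{\rho \to a} c^2(\rho) \Pi_{\mathrm{span}(e)^{\perp}} \Sigma(\rho) \Pi_{\mathrm{span}(e)^{\perp}}$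 exists and is injective on $\mathrm{span}(e)^{\perp}$. -/
/-!
If `L Lᵀ = Σ` and `c Π L → Λ`, then `c² Π Σ Π = (c Π L)(c Π L)ᵀ → Λ Λᵀ`. Being a limit of matrices
with range in `e⊥`, `Λ` maps `e⊥` into itself, injectively and hence onto; so if `Λ Λᵀ h = 0`, then
`Λᵀ h = 0` and `h ∈ e⊥` is orthogonal to all of `e⊥`.

Conversely, `V` is positive semidefinite, and it suffices to pick `L(ρ)` with
`c Π L(ρ) = (c² Π Σ Π)^{1/2}`: by continuity of the square root this tends to `V^{1/2}`, which has
the same kernel as `V`. Such an `L` exists for every positive definite `Σ`: with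
`g = Σ⁻¹e / eᵀΣ⁻¹e`, `A = I - e gᵀ` and `r = 1 / eᵀΣ⁻¹e` one has `A Σ Aᵀ = Σ - r e eᵀ`; and a
symmetric `R` with `R² = Π Σ Π` kills `e`, so `L = A R + √r e eᵀ` has `L Lᵀ = Σ` and `Π L = R`.
-/

open Matrix Filter Set

open scoped MatrixOrder NNReal Topology

namespace Matrix

variable {ι : Type*}

theorem transpose_one_sub_vecMulVec_self {α : Type*} [CommRing α] [DecidableEq ι] {e : ι → α} :
    (1 - vecMulVec e e)ᵀ = 1 - vecMulVec e e := by
  rw [transpose_sub, transpose_one, transpose_vecMulVec]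

variable [Fintype ι]

open scoped ComplexOrder in
theorem isClosed_setOf_posSemidef {𝕜 : Type*} [RCLike 𝕜] :
    IsClosed {M : Matrix ι ι 𝕜 | M.PosSemidef} := by
  simp only [posSemidef_iff_dotProduct_mulVec, Set.ofPred_and, Set.ofPred_forall]
  refine (isClosed_eq (by fun_prop) (by fun_prop)).inter
    (isClosed_iInter fun x => isClosed_le continuous_const ?_)
  exact continuous_const.dotProduct (continuous_id.matrix_mulVec continuous_const)

theorem tendsto_cfcSqrt [DecidableEq ι] {α : Type*} {l : Filter α} {N : α → Matrix ι ι ℝ}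
    {V : Matrix ι ι ℝ} (hNV : Tendsto N l (𝓝 V)) (hN : ∀ᶠ x in l, 0 ≤ N x) (hV : 0 ≤ V) :
    Tendsto (fun x => CFC.sqrt (N x)) l (𝓝 (CFC.sqrt V)) := by
  -- The L2 operator norm is a C⋆-norm inducing the usual topology on matrices, which makes the
  -- continuity results for the continuous functional calculus available.
  open scoped Matrix.Norms.L2Operator in
  simp only [CFC.sqrt_eq_cfc]
  set s := Set.Icc 0 ((‖V‖₊ + 1) * ‖(1 : Matrix ι ι ℝ)‖₊)
  have hs : ∀ A : Matrix ι ι ℝ, ‖A‖₊ ≤ ‖V‖₊ + 1 → spectrum ℝ≥0 A ⊆ s := fun A hA r hr => by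
    refine ⟨r.2, ?_⟩
    rw [← NNReal.coe_le_coe, NNReal.coe_mul]
    calc (r : ℝ) ≤ ‖A‖ * ‖(1 : Matrix ι ι ℝ)‖ :=
          (Real.le_norm_self _).trans (spectrum.norm_le_norm_mul_of_mem (𝕜 := ℝ) hr)
      _ ≤ _ := mul_le_mul_of_nonneg_right (NNReal.coe_le_coe.mpr hA) (norm_nonneg _)
  have hb : ∀ᶠ x in l, ‖N x‖₊ < ‖V‖₊ + 1 :=
    ((continuous_nnnorm.tendsto V).comp hNV).eventually_lt_const (lt_add_one _)
  exact hNV.cfc_nnreal isCompact_Icc NNReal.sqrt (hb.mono fun x hx => hs _ hx.le) hN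
    (hs V (le_add_of_nonneg_right zero_le_one)) hV

theorem eq_zero_of_mul_transpose_mulVec_eq_zero {M : Matrix ι ι ℝ}
    {W : Submodule ℝ (ι → ℝ)} (hmaps : ∀ x ∈ W, M *ᵥ x ∈ W)
    (hinj : ∀ x ∈ W, M *ᵥ x = 0 → x = 0) {h : ι → ℝ} (hW : h ∈ W)
    (hh : (M * Mᵀ) *ᵥ h = 0) : h = 0 := by
  have hMt : Mᵀ *ᵥ h = 0 := by
    have h0 := self_mul_conjTranspose_mulVec_eq_zero M h
    rw [conjTranspose_eq_transpose_of_trivial] at h0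
    exact h0.mp hh
  have hsurj : SurjOn M.mulVecLin W W := by
    refine (LinearMap.injOn_iff_surjOn hmaps).mp fun x hx y hy hxy => ?_
    refine sub_eq_zero.mp (hinj _ (W.sub_mem hx hy) ?_)
    rw [mulVec_sub]; exact sub_eq_zero.mpr hxy
  obtain ⟨x, -, rfl⟩ := hsurj hW
  rw [mulVecLin_apply] at hMt ⊢
  have hsq : M *ᵥ x ⬝ᵥ M *ᵥ x = x ⬝ᵥ Mᵀ *ᵥ (M *ᵥ x) := by
    rw [dotProduct_mulVec x Mᵀ, vecMul_transpose]
  rw [← dotProduct_self_eq_zero, hsq, hMt, dotProduct_zero]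

section UnitVector

variable {α : Type*} [CommRing α] {e : ι → α}

theorem isIdempotentElem_vecMulVec_self (he : e ⬝ᵥ e = 1) :
    IsIdempotentElem (vecMulVec e e) := by
  rw [IsIdempotentElem, vecMulVec_mul_vecMulVec, he, one_smul]

theorem one_sub_vecMulVec_self_mulVec_self [DecidableEq ι] (he : e ⬝ᵥ e = 1) :
    (1 - vecMulVec e e) *ᵥ e = 0 := by
  rw [sub_mulVec, one_mulVec, vecMulVec_mulVec, he]; simp

theorem dotProduct_one_sub_vecMulVec_self_mulVec [DecidableEq ι] (he : e ⬝ᵥ e = 1)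
    (v : ι → α) :
    e ⬝ᵥ (1 - vecMulVec e e) *ᵥ v = 0 := by
  rw [dotProduct_mulVec, ← mulVec_transpose, transpose_one_sub_vecMulVec_self,
    one_sub_vecMulVec_self_mulVec_self he, zero_dotProduct]

theorem one_sub_vecMulVec_self_mul_vecMulVec_self [DecidableEq ι] (he : e ⬝ᵥ e = 1) :
    (1 - vecMulVec e e) * vecMulVec e e = 0 := by
  rw [sub_mul, one_mul, isIdempotentElem_vecMulVec_self he, sub_self]

end UnitVector

theorem tendsto_mul_transpose_and_injective_of_tendsto_smul_mul [DecidableEq ι] {X : Type*}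
    {l : Filter X} [l.NeBot] {e : ι → ℝ} (he : e ⬝ᵥ e = 1) {c : X → ℝ}
    {L S : X → Matrix ι ι ℝ} {Λ : Matrix ι ι ℝ} (hLL : ∀ᶠ x in l, L x * (L x)ᵀ = S x)
    (hΛ : Tendsto (fun x => c x • ((1 - vecMulVec e e) * L x)) l (𝓝 Λ))
    (hinj : ∀ h : ι → ℝ, h ⬝ᵥ e = 0 → Λ *ᵥ h = 0 → h = 0) :
    Tendsto (fun x => c x ^ 2 • ((1 - vecMulVec e e) * S x * (1 - vecMulVec e e))) l
        (𝓝 (Λ * Λᵀ)) ∧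
      ∀ h : ι → ℝ, h ⬝ᵥ e = 0 → (Λ * Λᵀ) *ᵥ h = 0 → h = 0 := by
  set P := 1 - vecMulVec e e
  have hPt : Pᵀ = P := transpose_one_sub_vecMulVec_self
  refine ⟨(hΛ.mul ((continuous_id.matrix_transpose.tendsto Λ).comp hΛ)).congr' ?_, ?_⟩
  · filter_upwards [hLL] with x hx
    rw [← hx, Function.comp_apply, id_eq, transpose_smul, transpose_mul, hPt, smul_mul_smul_comm,
      ← sq]
    simp only [mul_assoc]
  · have hPΛ : P * Λ = Λ := tendsto_nhds_unique (tendsto_const_nhds.mul hΛ) (hΛ.congr fun x => by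
      rw [mul_smul_comm, ← mul_assoc, (isIdempotentElem_vecMulVec_self he).one_sub.eq])
    intro h hh hΛΛ
    refine eq_zero_of_mul_transpose_mulVec_eq_zero (W := LinearMap.ker (dotProductBilin ℝ ℝ e))
      (fun x _ => ?_) (fun x hx => hinj x ?_) ?_ hΛΛ
    · rw [LinearMap.mem_ker, dotProductBilin_apply_apply, ← hPΛ, ← mulVec_mulVec]
      exact dotProduct_one_sub_vecMulVec_self_mulVec he _
    · simpa [dotProduct_comm] using hx
    · simpa [dotProduct_comm] using hh

theorem PosDef.exists_dotProduct_eq_one_and_mul_mul_transpose_eq [DecidableEq ι]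
    {S : Matrix ι ι ℝ} (hS : S.PosDef) {e : ι → ℝ} (he : e ≠ 0) :
    ∃ (g : ι → ℝ) (r : ℝ), 0 < r ∧ g ⬝ᵥ e = 1 ∧
      (1 - vecMulVec e g) * S * (1 - vecMulVec e g)ᵀ = S - r • vecMulVec e e := by
  set δ := e ⬝ᵥ S⁻¹ *ᵥ e
  have hδ : 0 < δ := by simpa using hS.inv.dotProduct_mulVec_pos he
  have hSt : Sᵀ = S := (isHermitian_iff_isSymm.mp hS.isHermitian).eq
  set g := δ⁻¹ • S⁻¹ *ᵥ e
  have hge : g ⬝ᵥ e = 1 := by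
    rw [smul_dotProduct, dotProduct_comm, smul_eq_mul, inv_mul_cancel₀ hδ.ne']
  have hSg : S *ᵥ g = δ⁻¹ • e := by
    rw [mulVec_smul, mulVec_mulVec, mul_nonsing_inv _ ((isUnit_iff_isUnit_det S).mp hS.isUnit),
      one_mulVec]
  set A := 1 - vecMulVec e g
  have hAS : A * S = S - δ⁻¹ • vecMulVec e e := by
    rw [sub_mul, one_mul, vecMulVec_mul, ← mulVec_transpose, hSt, hSg, vecMulVec_smul]
  have hEA : vecMulVec e e * Aᵀ = 0 := by
    rw [← transpose_vecMulVec, ← transpose_mul, mul_vecMulVec, sub_mulVec, one_mulVec,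
      vecMulVec_mulVec, hge, MulOpposite.op_one, one_smul, sub_self, zero_vecMulVec,
      transpose_zero]
  refine ⟨g, δ⁻¹, inv_pos.mpr hδ, hge, ?_⟩
  calc A * S * Aᵀ = (S - δ⁻¹ • vecMulVec e e) * Aᵀ := by rw [hAS]
    _ = (A * S)ᵀ := by
        rw [sub_mul, smul_mul_assoc, hEA, smul_zero, sub_zero, transpose_mul, hSt]
    _ = S - δ⁻¹ • vecMulVec e e := by
        rw [hAS, transpose_sub, transpose_smul, hSt, transpose_vecMulVec]

theorem exists_mul_transpose_eq_and_one_sub_vecMulVec_mul_eq [DecidableEq ι]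
    {S R : Matrix ι ι ℝ} {e : ι → ℝ} (hS : S.PosDef) (he : e ⬝ᵥ e = 1) (hR : R.IsSymm)
    (hRR : R * R = (1 - vecMulVec e e) * S * (1 - vecMulVec e e)) :
    ∃ L : Matrix ι ι ℝ, L * Lᵀ = S ∧ (1 - vecMulVec e e) * L = R := by
  set E := vecMulVec e e
  set P := 1 - E
  have hPt : Pᵀ = P := transpose_one_sub_vecMulVec_self
  have he0 : e ≠ 0 := by rintro rfl; simp at he
  obtain ⟨g, r, hr, hge, hASA⟩ := hS.exists_dotProduct_eq_one_and_mul_mul_transpose_eq he0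
  set A := 1 - vecMulVec e g
  have hPe : P *ᵥ e = 0 := one_sub_vecMulVec_self_mulVec_self he
  have hRe : R *ᵥ e = 0 := by
    have h0 := self_mul_conjTranspose_mulVec_eq_zero R e
    rw [conjTranspose_eq_transpose_of_trivial, hR.eq] at h0
    rw [← h0, hRR, ← mulVec_mulVec, hPe, mulVec_zero]
  have hRE : R * E = 0 := by rw [mul_vecMulVec, hRe, zero_vecMulVec]
  have hER : E * R = 0 := by
    rw [vecMulVec_mul, ← mulVec_transpose, hR.eq, hRe, vecMulVec_zero]
  have hAP : A * P = A := by
    rw [mul_sub, mul_one, mul_vecMulVec, sub_mulVec, one_mulVec, vecMulVec_mulVec, hge,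
      MulOpposite.op_one, one_smul, sub_self, zero_vecMulVec, sub_zero]
  have hPA : P * A = P := by
    rw [mul_sub, mul_one, mul_vecMulVec, hPe, zero_vecMulVec, sub_zero]
  refine ⟨A * R + √r • E, ?_, ?_⟩
  · have hARRA : A * R * (R * Aᵀ) = S - r • E := by
      calc A * R * (R * Aᵀ) = A * P * S * (A * P)ᵀ := by
            rw [transpose_mul, hPt, ← mul_assoc, mul_assoc A R, hRR]
            simp only [mul_assoc]
        _ = S - r • E := by rw [hAP, hASA]
    rw [transpose_add, transpose_mul, hR.eq, transpose_smul, transpose_vecMulVec, mul_add, add_mul,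
      add_mul, hARRA, mul_smul_comm, mul_assoc, hRE, smul_mul_assoc, smul_mul_assoc, ← mul_assoc,
      hER, mul_zero, zero_mul, smul_zero, mul_smul_comm, isIdempotentElem_vecMulVec_self he,
      smul_smul, Real.mul_self_sqrt hr.le]
    abel
  · rw [mul_add, ← mul_assoc, hPA, sub_mul, one_mul, hER, sub_zero, mul_smul_comm,
      one_sub_vecMulVec_self_mul_vecMulVec_self he, smul_zero, add_zero]

theorem PosSemidef.smul_one_sub_vecMulVec_mul_mul [DecidableEq ι] {S : Matrix ι ι ℝ}
    (hS : S.PosSemidef) {c : ℝ} (hc : 0 ≤ c) (e : ι → ℝ) :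
    (c • ((1 - vecMulVec e e) * S * (1 - vecMulVec e e))).PosSemidef := by
  have h := hS.mul_mul_conjTranspose_same (1 - vecMulVec e e)
  rw [conjTranspose_eq_transpose_of_trivial, transpose_one_sub_vecMulVec_self] at h
  exact h.smul hc

theorem exists_mul_transpose_eq_and_smul_mul_eq_cfcSqrt [DecidableEq ι] {S : Matrix ι ι ℝ}
    {e : ι → ℝ} (hS : S.PosDef) (he : e ⬝ᵥ e = 1) {c : ℝ} (hc : 0 < c) :
    ∃ L : Matrix ι ι ℝ, L * Lᵀ = S ∧ c • ((1 - vecMulVec e e) * L) =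
      CFC.sqrt (c ^ 2 • ((1 - vecMulVec e e) * S * (1 - vecMulVec e e))) := by
  set N := c ^ 2 • ((1 - vecMulVec e e) * S * (1 - vecMulVec e e))
  have hN : 0 ≤ N :=
    nonneg_iff_posSemidef.mpr (hS.posSemidef.smul_one_sub_vecMulVec_mul_mul (sq_nonneg c) e)
  have hsymm : (c⁻¹ • CFC.sqrt N).IsSymm :=
    (isHermitian_iff_isSymm.mp (nonneg_iff_posSemidef.mp (CFC.sqrt_nonneg N)).isHermitian).smul _
  have hsq : c⁻¹ • CFC.sqrt N * c⁻¹ • CFC.sqrt N =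
      (1 - vecMulVec e e) * S * (1 - vecMulVec e e) := by
    rw [smul_mul_smul_comm, CFC.sqrt_mul_sqrt_self N hN, smul_smul, ← sq, inv_pow,
      inv_mul_cancel₀ (pow_ne_zero 2 hc.ne'), one_smul]
  obtain ⟨L, hLL, hPL⟩ := exists_mul_transpose_eq_and_one_sub_vecMulVec_mul_eq hS he hsymm hsq
  exact ⟨L, hLL, by rw [hPL, smul_smul, mul_inv_cancel₀ hc.ne', one_smul]⟩

end Matrix

theorem stmt6_general {n : ℕ} (a : ℝ) (ha : 0 < a)
    (Sig : ℝ → Matrix (Fin n) (Fin n) ℝ)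
    (hpd : ∀ ρ ∈ Set.Ico (0:ℝ) a, (Sig ρ).PosDef)
    (c : ℝ → ℝ) (hc : ∀ ρ ∈ Set.Ico (0:ℝ) a, 0 < c ρ)
    (e : Fin n → ℝ) (he : ∑ i, e i ^ 2 = 1) :
    (∃ (L : ℝ → Matrix (Fin n) (Fin n) ℝ) (Lam : Matrix (Fin n) (Fin n) ℝ),
        (∀ ρ ∈ Set.Ico (0:ℝ) a, L ρ * (L ρ)ᵀ = Sig ρ) ∧
        Tendsto (fun ρ => c ρ • ((1 - Matrix.vecMulVec e e) * L ρ))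
          (nhdsWithin a (Set.Ico 0 a)) (nhds Lam) ∧
        (∀ h : Fin n → ℝ, h ⬝ᵥ e = 0 → Lam.mulVec h = 0 → h = 0)) ↔
    (∃ V : Matrix (Fin n) (Fin n) ℝ,
        Tendsto
          (fun ρ => (c ρ) ^ 2 •
            ((1 - Matrix.vecMulVec e e) * Sig ρ * (1 - Matrix.vecMulVec e e)))
          (nhdsWithin a (Set.Ico 0 a)) (nhds V) ∧
        (∀ h : Fin n → ℝ, h ⬝ᵥ e = 0 → V.mulVec h = 0 → h = 0)) := by
  have he1 : e ⬝ᵥ e = 1 := by simpa [dotProduct, sq] using he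
  have := right_nhdsWithin_Ico_neBot ha
  have hmem : ∀ᶠ ρ in 𝓝[Ico 0 a] a, ρ ∈ Ico 0 a := self_mem_nhdsWithin
  set P := 1 - vecMulVec e e
  constructor
  · rintro ⟨L, Λ, hLL, hΛ, hΛinj⟩
    exact ⟨Λ * Λᵀ, tendsto_mul_transpose_and_injective_of_tendsto_smul_mul he1 (hmem.mono hLL) hΛ
      hΛinj⟩
  · rintro ⟨V, hV, hVinj⟩
    have hN : ∀ᶠ ρ in 𝓝[Ico 0 a] a, (c ρ ^ 2 • (P * Sig ρ * P)).PosSemidef := by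
      filter_upwards [hmem] with ρ hρ
      exact (hpd ρ hρ).posSemidef.smul_one_sub_vecMulVec_mul_mul (sq_nonneg _) e
    have hV0 : 0 ≤ V := nonneg_iff_posSemidef.mpr (isClosed_setOf_posSemidef.mem_of_tendsto hV hN)
    choose! L hLL hPL using fun ρ (hρ : ρ ∈ Ico 0 a) =>
      exists_mul_transpose_eq_and_smul_mul_eq_cfcSqrt (hpd ρ hρ) he1 (hc ρ hρ)
    refine ⟨L, CFC.sqrt V, hLL, ?_, fun h hh hsqrt => hVinj h hh ?_⟩
    · refine (tendsto_cfcSqrt hV (hN.mono fun ρ => nonneg_iff_posSemidef.mpr) hV0).congr' ?_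
      filter_upwards [hmem] with ρ hρ
      exact (hPL ρ hρ).symm
    · rw [← CFC.sqrt_mul_sqrt_self V hV0, ← mulVec_mulVec, hsqrt, mulVec_zero]

/-- Lemma on Assumption ASCII: there exists a square root `L⋆` of `Σ(·)` with
`c(ρ) Π_{e⊥} L⋆(ρ)` converging to a matrix injective on `span(e)⊥`, if and only if
`c²(ρ) Π_{e⊥} Σ(ρ) Π_{e⊥}` converges to a matrix injective on `span(e)⊥`.
Here `Π_{e⊥} = I - e eᵀ` for the normalized vector `e`. -/
theorem stmt6 {n : ℕ} (hn : 2 ≤ n) (a : ℝ) (ha : 0 < a)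
    (Sig : ℝ → Matrix (Fin n) (Fin n) ℝ)
    (hpd : ∀ ρ ∈ Set.Ico (0:ℝ) a, (Sig ρ).PosDef)
    (c : ℝ → ℝ) (hc : ∀ ρ ∈ Set.Ico (0:ℝ) a, 0 < c ρ)
    (e : Fin n → ℝ) (he : ∑ i, e i ^ 2 = 1) :
    (∃ (L : ℝ → Matrix (Fin n) (Fin n) ℝ) (Lam : Matrix (Fin n) (Fin n) ℝ),
        (∀ ρ ∈ Set.Ico (0:ℝ) a, L ρ * (L ρ)ᵀ = Sig ρ) ∧
        Tendsto (fun ρ => c ρ • ((1 - Matrix.vecMulVec e e) * L ρ))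
          (nhdsWithin a (Set.Ico 0 a)) (nhds Lam) ∧
        (∀ h : Fin n → ℝ, h ⬝ᵥ e = 0 → Lam.mulVec h = 0 → h = 0)) ↔
    (∃ V : Matrix (Fin n) (Fin n) ℝ,
        Tendsto
          (fun ρ => (c ρ) ^ 2 •
            ((1 - Matrix.vecMulVec e e) * Sig ρ * (1 - Matrix.vecMulVec e e)))
          (nhdsWithin a (Set.Ico 0 a)) (nhds V) ∧
        (∀ h : Fin n → ℝ, h ⬝ᵥ e = 0 → V.mulVec h = 0 → h = 0)) :=
  stmt6_general a ha Sig hpd c hc e he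
end

section
/- Suppose Assumptions hold: $\lambda_n^{-1}(\Sigma(\rho))\Sigma(\rho) \to e e'$ as $\rho \to a$, and $c^2(\rho)\Pi_{\mathrm{span}(e^*)^{\perp}}\Sigma(\rho)\Pi_{\mathrm{span}(e^*)^{\perp}} \to V$ where $V$ restricted to $\mathrm{span}(e^*)^{\perp}$ is a bijection onto $\mathrm{span}(e^*)^{\perp}$, for normalized vectors $e, e^* \in \mathbb{R}^n$. If $n > 2$, then $\mathrm{span}(e) = \mathrm{span}(e^*)$. -/
open Matrix Filter Set Topology

/-!
Let `P = 1 - e⋆ e⋆ᵀ` and `w = P e`. If `w = 0`, then `e` is a multiple of `e⋆`. Otherwise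
`P (λ⁻¹ Σ) P → w wᵀ ≠ 0`, while its rescalings `(c² λ) • P (λ⁻¹ Σ) P = c² P Σ P` converge to `V`.
When a family tends to a nonzero limit and its rescalings converge too, the scalars converge,
so `V = L • w wᵀ` has rank at most one. For `n > 2` some nonzero `h` is orthogonal to both `e⋆`
and `w`; then `V h = 0`, contradicting the injectivity of `V` on `e⋆⊥`.
-/

instance Matrix.instSeparatingDual {𝕜 m n : Type*} [RCLike 𝕜] [Fintype m] [Fintype n] :
    SeparatingDual 𝕜 (Matrix m n 𝕜) :=
  inferInstanceAs (SeparatingDual 𝕜 (m → n → 𝕜))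

theorem Filter.Tendsto.exists_eq_smul_of_tendsto_smul {𝕜 E α : Type*} [NormedField 𝕜]
    [AddCommGroup E] [Module 𝕜 E] [TopologicalSpace E]
    [ContinuousSMul 𝕜 E] [T2Space E] [SeparatingDual 𝕜 E]
    {l : Filter α} [l.NeBot] {f : α → E} {s : α → 𝕜} {A B : E}
    (hf : Tendsto f l (𝓝 A)) (hA : A ≠ 0) (hsf : Tendsto (fun x => s x • f x) l (𝓝 B)) :
    ∃ L : 𝕜, B = L • A := by
  obtain ⟨φ, hφA⟩ := SeparatingDual.exists_ne_zero (R := 𝕜) hA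
  have hφf : Tendsto (fun x => φ (f x)) l (𝓝 (φ A)) := (φ.continuous.tendsto A).comp hf
  have hφsf : Tendsto (fun x => s x * φ (f x)) l (𝓝 (φ B)) := by
    simpa only [Function.comp_def, map_smul, smul_eq_mul] using (φ.continuous.tendsto B).comp hsf
  have hs : Tendsto s l (𝓝 (φ B / φ A)) :=
    (hφsf.div hφf hφA).congr' <|
      (hφf.eventually_ne hφA).mono fun x hx => mul_div_cancel_right₀ _ hx
  exact ⟨_, tendsto_nhds_unique hsf (hs.smul hf)⟩

theorem eventually_ne_zero_of_tendsto_inv_smul {𝕜 E α : Type*} [DivisionRing 𝕜] [AddCommGroup E]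
    [Module 𝕜 E] [TopologicalSpace E] [T1Space E] {l : Filter α} {r : α → 𝕜} {S : α → E} {A : E}
    (h : Tendsto (fun x => (r x)⁻¹ • S x) l (𝓝 A)) (hA : A ≠ 0) : ∀ᶠ x in l, r x ≠ 0 :=
  (h.eventually_ne hA).mono fun x hx hr => hx (by simp [hr])

theorem exists_ne_zero_dotProduct_eq_zero_and_eq_zero {K : Type*} [Field K] {n : ℕ} (hn : 2 < n)
    (u v : Fin n → K) : ∃ h ≠ 0, h ⬝ᵥ u = 0 ∧ h ⬝ᵥ v = 0 := by
  have hker : LinearMap.ker (Matrix.of ![u, v]).mulVecLin ≠ ⊥ :=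
    LinearMap.ker_ne_bot_of_finrank_lt (by simpa using hn)
  obtain ⟨h, hmem, hh0⟩ := Submodule.exists_mem_ne_zero_of_ne_bot hker
  have hmul : Matrix.of ![u, v] *ᵥ h = 0 := hmem
  refine ⟨h, hh0, ?_, ?_⟩
  · simpa [dotProduct_comm] using congrFun hmul 0
  · simpa [dotProduct_comm] using congrFun hmul 1

theorem Matrix.one_sub_vecMulVec_mulVec {R n : Type*} [CommRing R] [Fintype n] [DecidableEq n]
    (u x : n → R) : (1 - vecMulVec u u) *ᵥ x = x - (u ⬝ᵥ x) • u := by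
  simp [sub_mulVec, vecMulVec_mulVec]

theorem Matrix.mul_vecMulVec_mul_transpose {R m n : Type*} [CommSemiring R] [Fintype n]
    (A : Matrix m n R) (x : n → R) : A * vecMulVec x x * Aᵀ = vecMulVec (A *ᵥ x) (A *ᵥ x) := by
  rw [mul_vecMulVec, vecMulVec_mul, vecMul_transpose]

theorem Matrix.transpose_one_sub_vecMulVec_self_s7 {R n : Type*} [CommRing R] [DecidableEq n]
    (u : n → R) : (1 - vecMulVec u u)ᵀ = 1 - vecMulVec u u := by
  rw [transpose_sub, transpose_one, transpose_vecMulVec]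

theorem stmt7_general {n : ℕ} (hn : 2 < n) (a : ℝ) (ha : 0 < a)
    (Sig : ℝ → Matrix (Fin n) (Fin n) ℝ)
    (c : ℝ → ℝ)
    (e estar : Fin n → ℝ) (he : ∑ i, e i ^ 2 = 1)
    (lam : ℝ → ℝ)
    (hconc : Tendsto (fun ρ => (lam ρ)⁻¹ • Sig ρ) (nhdsWithin a (Set.Ico 0 a))
      (nhds (Matrix.vecMulVec e e)))
    (V : Matrix (Fin n) (Fin n) ℝ)
    (hV : Tendsto
      (fun ρ => (c ρ) ^ 2 •
        ((1 - Matrix.vecMulVec estar estar) * Sig ρ * (1 - Matrix.vecMulVec estar estar)))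
      (nhdsWithin a (Set.Ico 0 a)) (nhds V))
    (hVinj : ∀ h : Fin n → ℝ, h ⬝ᵥ estar = 0 → V.mulVec h = 0 → h = 0) :
    Submodule.span ℝ {e} = Submodule.span ℝ {estar} := by
  have he0 : e ≠ 0 := by rintro rfl; simp at he
  set P := 1 - vecMulVec estar estar
  set w := P *ᵥ e
  by_cases hw : w = 0
  · have hee : e = (estar ⬝ᵥ e) • estar := sub_eq_zero.mp (by rwa [← one_sub_vecMulVec_mulVec])
    have hunit : IsUnit (estar ⬝ᵥ e) :=
      isUnit_iff_ne_zero.mpr fun h0 => he0 (by simpa [h0] using hee)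
    rw [hee, Submodule.span_singleton_smul_eq hunit]
  have := right_nhdsWithin_Ico_neBot ha
  have hPT : Pᵀ = P := transpose_one_sub_vecMulVec_self_s7 estar
  have hPconc : Tendsto (fun ρ => P * ((lam ρ)⁻¹ • Sig ρ) * P) (𝓝[Ico 0 a] a)
      (𝓝 (vecMulVec w w)) := by
    rw [← mul_vecMulVec_mul_transpose, hPT]
    exact ((by fun_prop : Continuous fun M => P * M * P).tendsto _).comp hconc
  have hlam : ∀ᶠ ρ in 𝓝[Ico 0 a] a, lam ρ ≠ 0 :=
    eventually_ne_zero_of_tendsto_inv_smul hconc (vecMulVec_ne_zero he0 he0)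
  have hVscaled : Tendsto (fun ρ => (c ρ ^ 2 * lam ρ) • (P * ((lam ρ)⁻¹ • Sig ρ) * P))
      (𝓝[Ico 0 a] a) (𝓝 V) := by
    refine hV.congr' (hlam.mono fun ρ hρ => ?_)
    dsimp only
    rw [Matrix.mul_smul, Matrix.smul_mul, smul_smul, mul_inv_cancel_right₀ hρ]
  obtain ⟨L, rfl⟩ := hPconc.exists_eq_smul_of_tendsto_smul (vecMulVec_ne_zero hw hw) hVscaled
  obtain ⟨h, hh0, hhs, hhw⟩ := exists_ne_zero_dotProduct_eq_zero_and_eq_zero hn estar w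
  exact (hh0 (hVinj h hhs (by simp [smul_mulVec, vecMulVec_mulVec, dotProduct_comm w, hhw]))).elim

/-- If Assumption ASC holds with concentration direction `e` and Assumption ASCII (in the
equivalent form of Lemma AR1) holds with vector `e⋆`, and `n > 2`, then
`span(e) = span(e⋆)`. -/
theorem stmt7 {n : ℕ} (hn : 2 < n) (a : ℝ) (ha : 0 < a)
    (Sig : ℝ → Matrix (Fin n) (Fin n) ℝ)
    (hpd : ∀ ρ ∈ Set.Ico (0:ℝ) a, (Sig ρ).PosDef)
    (c : ℝ → ℝ) (hc : ∀ ρ ∈ Set.Ico (0:ℝ) a, 0 < c ρ)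
    (e estar : Fin n → ℝ) (he : ∑ i, e i ^ 2 = 1) (hestar : ∑ i, estar i ^ 2 = 1)
    (lam : ℝ → ℝ)
    (hlam : ∀ ρ ∈ Set.Ico (0:ℝ) a,
      IsGreatest {t : ℝ | ∃ v ≠ 0, (Sig ρ).mulVec v = t • v} (lam ρ))
    (hconc : Tendsto (fun ρ => (lam ρ)⁻¹ • Sig ρ) (nhdsWithin a (Set.Ico 0 a))
      (nhds (Matrix.vecMulVec e e)))
    (V : Matrix (Fin n) (Fin n) ℝ)
    (hV : Tendsto
      (fun ρ => (c ρ) ^ 2 •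
        ((1 - Matrix.vecMulVec estar estar) * Sig ρ * (1 - Matrix.vecMulVec estar estar)))
      (nhdsWithin a (Set.Ico 0 a)) (nhds V))
    (hVinj : ∀ h : Fin n → ℝ, h ⬝ᵥ estar = 0 → V.mulVec h = 0 → h = 0)
    (hVsurj : ∀ w : Fin n → ℝ, w ⬝ᵥ estar = 0 →
      ∃ h : Fin n → ℝ, h ⬝ᵥ estar = 0 ∧ V.mulVec h = w) :
    Submodule.span ℝ {e} = Submodule.span ℝ {estar} :=
  stmt7_general hn a ha Sig c e estar he lam hconc V hV hVinj
end

section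
/- Let $T: \mathbb{R}^n \to \mathbb{R}$ be invariant under $G_X$ (i.e., $T(\gamma y + X\theta) = T(y)$ for all $\gamma \neq 0$, $\theta \in \mathbb{R}^k$), let $e$ be a normalized vector, $q$ a positive integer, and $D: \mathbb{R}^n \to \mathbb{R}$ a homogeneous polynomial of degree $q$ such that $T(e+h) = T(e) + D(h) + R(h)$ for all $h$, where $R(h)/\|h\|^q \to 0$ as $h \to 0$, $h \neq 0$. Then $D(h) = D(\Pi_{\mathrm{span}(e)^{\perp}} h)$ holds for every $h \in \mathbb{R}^n$; in particular, $D$ vanishes on all of $\mathrm{span}(e)$. -/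
open Matrix Filter Topology

/-!
For small `s > 0` and any `t`, `e + s • h = (1 + s t) • (e + c • (h - t • e))` with
`c = s / (1 + s t)`, so by scale invariance the expansions of `T` at `e` in the directions `s • h`
and `c • (h - t • e)` agree. Dividing by `s ^ q` and letting
`s → 0⁺` gives `D h = D (h - t • e)` for every `t`; then `t = h ⬝ᵥ e` is the projection identity and
`h = t • e` gives `D (t • e) = D 0 = 0`.
-/

theorem MvPolynomial.IsHomogeneous.eval_smul {σ R : Type*} [CommSemiring R] {q : ℕ}
    {p : MvPolynomial σ R} (hp : p.IsHomogeneous q) (c : R) (x : σ → R) :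
    MvPolynomial.eval (c • x) p = c ^ q * MvPolynomial.eval x p := by
  rw [MvPolynomial.eval_eq, MvPolynomial.eval_eq, Finset.mul_sum]
  refine Finset.sum_congr rfl fun d hd => ?_
  have hdeg : ∑ i ∈ d.support, d i = q := by
    rw [← hp (MvPolynomial.mem_support_iff.mp hd), Finsupp.weight_apply]
    simp [Finsupp.sum]
  calc p.coeff d * ∏ i ∈ d.support, (c • x) i ^ d i
      = p.coeff d * ((∏ i ∈ d.support, c ^ d i) * ∏ i ∈ d.support, x i ^ d i) := by
        simp [mul_pow, Finset.prod_mul_distrib]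
    _ = c ^ q * (p.coeff d * ∏ i ∈ d.support, x i ^ d i) := by
        rw [Finset.prod_pow_eq_pow_sum, hdeg]; ring

theorem sqrt_sum_sq_smul {ι : Type*} [Fintype ι] (s : ℝ) (x : ι → ℝ) :
    √(∑ i, (s • x) i ^ 2) = |s| * √(∑ i, x i ^ 2) := by
  simp only [Pi.smul_apply, smul_eq_mul, mul_pow, ← Finset.mul_sum]
  rw [Real.sqrt_mul (sq_nonneg s), Real.sqrt_sq_eq_abs]

theorem sqrt_sum_sq_ne_zero {ι : Type*} [Fintype ι] {x : ι → ℝ} (hx : x ≠ 0) :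
    √(∑ i, x i ^ 2) ≠ 0 := by
  obtain ⟨i, hi⟩ := Function.ne_iff.mp hx
  exact (Real.sqrt_pos.mpr (Finset.sum_pos' (fun j _ => sq_nonneg (x j))
    ⟨i, Finset.mem_univ i, sq_pos_of_ne_zero hi⟩)).ne'

theorem tendsto_div_pow_along_ray {E : Type*} [AddCommGroup E] [Module ℝ E] [TopologicalSpace E]
    [ContinuousSMul ℝ E] {R N : E → ℝ} {q : ℕ} {x : E}
    (hR : Tendsto (fun h => R h / N h ^ q) (𝓝[≠] 0) (𝓝 0))
    (hN : ∀ s : ℝ, 0 < s → N (s • x) = s * N x) (hx : x ≠ 0) (hNx : N x ≠ 0) :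
    Tendsto (fun s : ℝ => R (s • x) / s ^ q) (𝓝[>] 0) (𝓝 0) := by
  have hray : Tendsto (fun s : ℝ => s • x) (𝓝[>] 0) (𝓝[≠] 0) := by
    refine tendsto_nhdsWithin_iff.mpr ⟨?_, ?_⟩
    · exact ((by fun_prop : Continuous fun s : ℝ => s • x).tendsto' 0 0 (zero_smul ℝ x)).mono_left
        nhdsWithin_le_nhds
    · filter_upwards [self_mem_nhdsWithin] with s hs
      exact smul_ne_zero (ne_of_gt hs) hx
  have hlim := (hR.comp hray).mul_const (N x ^ q)
  rw [zero_mul] at hlim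
  refine hlim.congr' ?_
  filter_upwards [self_mem_nhdsWithin] with s (hs : 0 < s)
  simp only [Function.comp_apply, hN s hs, mul_pow]
  field_simp

section Invariance

variable {E : Type*} [AddCommGroup E] [Module ℝ E] {T D R : E → ℝ} {e : E} {q : ℕ}

theorem taylor_div_pow_eq_of_smul_invariant (hT : ∀ γ : ℝ, 0 < γ → ∀ y, T (γ • y) = T y)
    (hD : ∀ s : ℝ, 0 < s → ∀ x, D (s • x) = s ^ q * D x)
    (hTay : ∀ h, T (e + h) = T e + D h + R h) (h : E) {t s : ℝ} (hs : 0 < s)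
    (hst : 0 < 1 + s * t) :
    D h + R (s • h) / s ^ q = ((1 + s * t)⁻¹) ^ q *
      (D (h - t • e) + R ((s / (1 + s * t)) • (h - t • e)) / (s / (1 + s * t)) ^ q) := by
  set γ := 1 + s * t
  set c := s / γ
  set v := h - t • e
  have hc : 0 < c := div_pos hs hst
  have hscale : γ • (e + c • v) = e + s • h := by
    rw [smul_add, smul_smul, mul_div_cancel₀ s hst.ne']
    simp only [v, γ]
    module
  have hexp : T e + s ^ q * D h + R (s • h) = T e + c ^ q * D v + R (c • v) := by
    rw [← hD s hs, ← hD c hc, ← hTay, ← hTay, ← hscale, hT γ hst]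
  have hcq : c ^ q = s ^ q * (γ⁻¹) ^ q := by rw [div_pow, inv_pow, div_eq_mul_inv]
  have hsq : s ^ q ≠ 0 := pow_ne_zero q hs.ne'
  have hγq : (γ⁻¹) ^ q ≠ 0 := pow_ne_zero q (inv_ne_zero hst.ne')
  rw [hcq] at hexp ⊢
  field_simp
  linear_combination hexp

theorem apply_sub_smul_eq_of_smul_invariant (hT : ∀ γ : ℝ, 0 < γ → ∀ y, T (γ • y) = T y)
    (hD : ∀ s : ℝ, 0 < s → ∀ x, D (s • x) = s ^ q * D x)
    (hTay : ∀ h, T (e + h) = T e + D h + R h)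
    (hR : ∀ x, Tendsto (fun s : ℝ => R (s • x) / s ^ q) (𝓝[>] 0) (𝓝 0)) (h : E) (t : ℝ) :
    D (h - t • e) = D h := by
  have hγ : Tendsto (fun s : ℝ => 1 + s * t) (𝓝[>] 0) (𝓝 1) :=
    ((by fun_prop : Continuous fun s : ℝ => 1 + s * t).tendsto' 0 1 (by simp)).mono_left
      nhdsWithin_le_nhds
  have hγpos : ∀ᶠ s in 𝓝[>] (0 : ℝ), 0 < 1 + s * t := hγ.eventually (lt_mem_nhds one_pos)
  have hc : Tendsto (fun s : ℝ => s / (1 + s * t)) (𝓝[>] 0) (𝓝[>] 0) := by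
    refine tendsto_nhdsWithin_iff.mpr ⟨?_, ?_⟩
    · have hs : Tendsto (fun s : ℝ => s) (𝓝[>] 0) (𝓝 0) := nhdsWithin_le_nhds
      have hdiv := hs.div hγ one_ne_zero
      rw [zero_div] at hdiv
      exact hdiv
    · filter_upwards [self_mem_nhdsWithin, hγpos] with s hs hst
      exact div_pos hs hst
  have hγq : Tendsto (fun s : ℝ => ((1 + s * t)⁻¹) ^ q) (𝓝[>] 0) (𝓝 1) := by
    simpa using (hγ.inv₀ one_ne_zero).pow q
  have hrhs := hγq.mul ((tendsto_const_nhds (x := D (h - t • e))).add ((hR (h - t • e)).comp hc))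
  rw [one_mul, add_zero] at hrhs
  have hlhs := (tendsto_const_nhds (x := D h)).add (hR h)
  rw [add_zero] at hlhs
  refine tendsto_nhds_unique (hrhs.congr' ?_) hlhs
  filter_upwards [self_mem_nhdsWithin, hγpos] with s hs hst
  exact (taylor_div_pow_eq_of_smul_invariant hT hD hTay h hs hst).symm

end Invariance

theorem stmt8_general {n k : ℕ}
    (X : Matrix (Fin n) (Fin k) ℝ)
    (T : (Fin n → ℝ) → ℝ)
    (hTinv : ∀ γ : ℝ, γ ≠ 0 → ∀ (θ : Fin k → ℝ) (y : Fin n → ℝ),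
      T (γ • y + X.mulVec θ) = T y)
    (e : Fin n → ℝ)
    (q : ℕ) (hq : 0 < q)
    (D : (Fin n → ℝ) → ℝ)
    (p : MvPolynomial (Fin n) ℝ) (hp : p.IsHomogeneous q)
    (hD : ∀ h : Fin n → ℝ, D h = MvPolynomial.eval h p)
    (R : (Fin n → ℝ) → ℝ)
    (hTay : ∀ h : Fin n → ℝ, T (e + h) = T e + D h + R h)
    (hR : Tendsto (fun h : Fin n → ℝ => R h / (Real.sqrt (∑ i, h i ^ 2)) ^ q)
      (nhdsWithin 0 {(0 : Fin n → ℝ)}ᶜ) (nhds 0)) :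
    (∀ h : Fin n → ℝ, D h = D (h - (h ⬝ᵥ e) • e)) ∧ (∀ t : ℝ, D (t • e) = 0) := by
  have hDhom : ∀ (s : ℝ) x, D (s • x) = s ^ q * D x := by simp [hD, hp.eval_smul]
  have hD0 : D 0 = 0 := by simpa [zero_pow hq.ne'] using hDhom 0 0
  have hR0 : R 0 = 0 := by simpa [hD0] using hTay 0
  have hRray : ∀ x, Tendsto (fun s : ℝ => R (s • x) / s ^ q) (𝓝[>] 0) (𝓝 0) := by
    intro x
    rcases eq_or_ne x 0 with rfl | hx
    · simp [hR0]
    · refine tendsto_div_pow_along_ray hR (fun s hs => ?_) hx (sqrt_sum_sq_ne_zero hx)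
      rw [sqrt_sum_sq_smul, abs_of_pos hs]
  have hshift : ∀ h t, D (h - t • e) = D h :=
    apply_sub_smul_eq_of_smul_invariant (fun γ hγ y => by simpa using hTinv γ hγ.ne' 0 y)
      (fun s _ => hDhom s) hTay hRray
  refine ⟨fun h => (hshift h _).symm, fun t => ?_⟩
  rw [← hshift (t • e) t, sub_self, hD0]

/-- If a `G_X`-invariant test statistic `T` admits the quasi-Taylor expansion
`T(e+h) = T(e) + D(h) + R(h)` with `D` a homogeneous polynomial of degree `q` and
`R(h)/‖h‖^q → 0`, then `D(h) = D(Π_{span(e)⊥} h)` for every `h`; in particular `D`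
vanishes on `span(e)`. -/
theorem stmt8 {n k : ℕ} (hn : 2 ≤ n) (hk : k < n)
    (X : Matrix (Fin n) (Fin k) ℝ)
    (T : (Fin n → ℝ) → ℝ)
    (hTinv : ∀ γ : ℝ, γ ≠ 0 → ∀ (θ : Fin k → ℝ) (y : Fin n → ℝ),
      T (γ • y + X.mulVec θ) = T y)
    (e : Fin n → ℝ) (he : ∑ i, e i ^ 2 = 1)
    (q : ℕ) (hq : 0 < q)
    (D : (Fin n → ℝ) → ℝ)
    (p : MvPolynomial (Fin n) ℝ) (hp : p.IsHomogeneous q)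
    (hD : ∀ h : Fin n → ℝ, D h = MvPolynomial.eval h p)
    (R : (Fin n → ℝ) → ℝ)
    (hTay : ∀ h : Fin n → ℝ, T (e + h) = T e + D h + R h)
    (hR : Tendsto (fun h : Fin n → ℝ => R h / (Real.sqrt (∑ i, h i ^ 2)) ^ q)
      (nhdsWithin 0 {(0 : Fin n → ℝ)}ᶜ) (nhds 0)) :
    (∀ h : Fin n → ℝ, D h = D (h - (h ⬝ᵥ e) • e)) ∧ (∀ t : ℝ, D (t • e) = 0) :=
  stmt8_general X T hTinv e q hq D p hp hD R hTay hR
end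

section
/- Let $T_B(y) = y' C_X' B C_X y / \|C_X y\|^2$ for $y \notin \mathrm{span}(X)$, and let $e \notin \mathrm{span}(X)$ be a normalized vector such that $C_X e$ is an eigenvector of $B$ with eigenvalue $\lambda$. Then for every $h \in \mathbb{R}^n$, $T_B(e+h) = T_B(e) + D(h) + R(h)$ with $D(h) = \|C_X e\|^{-2} h'(C_X' B C_X - \lambda C_X' C_X)h$ and $R(h)/\|h\|^2 \to 0$ as $h \to 0$; moreover $T_B(e) = \lambda$. -/
/-!
Let `Q = C_Xᵀ C_X`, `M = C_Xᵀ B C_X` and `A = M - λ Q`, so that `T_B(y) = yᵀ M y / yᵀ Q y` and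
`‖C_X y‖² = yᵀ Q y`. The eigenvector hypothesis gives `M e = λ Q e`, i.e. `A e = 0`, and since `A`
is symmetric the quadratic form of `A` does not see `e`: `(e + h)ᵀ A (e + h) = hᵀ A h`. Hence

  `T_B(e + h) - λ = hᵀ A h / ‖C_X (e + h)‖²`,

so the remainder is `hᵀ A h · (‖C_X (e + h)‖⁻² - ‖C_X e‖⁻²)`: the bounded quotient
`hᵀ A h / ‖h‖²` times a factor that tends to `0` by continuity.
-/

open Matrix Filter Topology

namespace Matrix

variable {ι κ R : Type*}

theorem IsSymm.transpose_mul_mul [Fintype κ] [CommSemiring R] {B : Matrix κ κ R} (hB : B.IsSymm)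
    (C : Matrix κ ι R) : (Cᵀ * B * C).IsSymm := by
  simp only [IsSymm, transpose_mul, transpose_transpose, hB.eq, Matrix.mul_assoc]

theorem isSymm_transpose_mul [Fintype κ] [CommSemiring R] (C : Matrix κ ι R) :
    (Cᵀ * C).IsSymm := by
  simp only [IsSymm, transpose_mul, transpose_transpose]

theorem dotProduct_transpose_mul_mulVec [Fintype ι] [Fintype κ] [CommSemiring R]
    (C : Matrix κ ι R) (v : ι → R) : v ⬝ᵥ (Cᵀ * C) *ᵥ v = C *ᵥ v ⬝ᵥ C *ᵥ v := by
  rw [← mulVec_mulVec, dotProduct_mulVec, vecMul_transpose]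

theorem dotProduct_sub_smul_mulVec [Fintype ι] [CommRing R] (M Q : Matrix ι ι R) (c : R)
    (v : ι → R) :
    v ⬝ᵥ (M - c • Q) *ᵥ v = v ⬝ᵥ M *ᵥ v - c * (v ⬝ᵥ Q *ᵥ v) := by
  rw [sub_mulVec, dotProduct_sub, smul_mulVec, dotProduct_smul, smul_eq_mul]

theorem IsSymm.dotProduct_mulVec_add_of_mulVec_eq_zero [Fintype ι] [CommRing R]
    {A : Matrix ι ι R} (hA : A.IsSymm) {e : ι → R} (he : A *ᵥ e = 0) (h : ι → R) :
    (e + h) ⬝ᵥ A *ᵥ (e + h) = h ⬝ᵥ A *ᵥ h := by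
  have he' : e ᵥ* A = 0 := by rw [← mulVec_transpose, hA.eq, he]
  rw [mulVec_add, he, zero_add, add_dotProduct, dotProduct_mulVec e, he', zero_dotProduct,
    zero_add]

theorem IsSymm.div_sub_eq_of_mulVec_eq_smul [Fintype ι] [Field R] {M Q : Matrix ι ι R}
    (hM : M.IsSymm) (hQ : Q.IsSymm) {e : ι → R} {lam : R} (he : M *ᵥ e = lam • Q *ᵥ e) (h : ι → R)
    (hq : (e + h) ⬝ᵥ Q *ᵥ (e + h) ≠ 0) :
    (e + h) ⬝ᵥ M *ᵥ (e + h) / ((e + h) ⬝ᵥ Q *ᵥ (e + h)) - lam =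
      h ⬝ᵥ (M - lam • Q) *ᵥ h / ((e + h) ⬝ᵥ Q *ᵥ (e + h)) := by
  have hAe : (M - lam • Q) *ᵥ e = 0 := by rw [sub_mulVec, smul_mulVec, he, sub_self]
  rw [← (hM.sub (hQ.smul lam)).dotProduct_mulVec_add_of_mulVec_eq_zero hAe h,
    dotProduct_sub_smul_mulVec, sub_div, mul_div_cancel_right₀ _ hq]

theorem abs_dotProduct_mulVec_self_le [Fintype ι] (A : Matrix ι ι ℝ) (h : ι → ℝ) :
    |h ⬝ᵥ A *ᵥ h| ≤ (∑ i, ∑ j, |A i j|) * ∑ i, h i ^ 2 := by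
  set S := ∑ i, h i ^ 2
  have hsq : ∀ i, h i ^ 2 ≤ S := fun i =>
    Finset.single_le_sum (fun j _ => sq_nonneg (h j)) (Finset.mem_univ i)
  have hprod : ∀ i j, |h i| * |h j| ≤ S := fun i j => by
    nlinarith [two_mul_le_add_sq |h i| |h j|, sq_abs (h i), sq_abs (h j), hsq i, hsq j]
  have hexpand : h ⬝ᵥ A *ᵥ h = ∑ i, ∑ j, h i * (A i j * h j) := by
    simp only [dotProduct, mulVec, Finset.mul_sum]
  rw [hexpand, Finset.sum_mul]
  refine (Finset.abs_sum_le_sum_abs _ _).trans (Finset.sum_le_sum fun i _ => ?_)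
  rw [Finset.sum_mul]
  refine (Finset.abs_sum_le_sum_abs _ _).trans (Finset.sum_le_sum fun j _ => ?_)
  calc |h i * (A i j * h j)| = |A i j| * (|h i| * |h j|) := by rw [abs_mul, abs_mul]; ring
    _ ≤ |A i j| * S := mul_le_mul_of_nonneg_left (hprod i j) (abs_nonneg _)

/-- Valid also at `h = 0`, where the quotient is `0 / 0 = 0`. -/
theorem abs_dotProduct_mulVec_self_div_le [Fintype ι] (A : Matrix ι ι ℝ) (h : ι → ℝ) :
    |h ⬝ᵥ A *ᵥ h / ∑ i, h i ^ 2| ≤ ∑ i, ∑ j, |A i j| := by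
  have hK : 0 ≤ ∑ i, ∑ j, |A i j| := by positivity
  rcases (Finset.sum_nonneg fun i _ => sq_nonneg (h i)).eq_or_lt with hS | hS
  · rwa [← hS, div_zero, abs_zero]
  · rw [abs_div, abs_of_pos hS, div_le_iff₀ hS]
    exact abs_dotProduct_mulVec_self_le A h

end Matrix

theorem stmt10_general {n k : ℕ}
    (X : Matrix (Fin n) (Fin k) ℝ)
    (C : Matrix (Fin (n - k)) (Fin n) ℝ)
    (hC2 : ∀ v : Fin n → ℝ, (Cᵀ * C).mulVec v = 0 ↔ v ∈ Set.range X.mulVec)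
    (B : Matrix (Fin (n - k)) (Fin (n - k)) ℝ) (hB : B.IsSymm)
    (T : (Fin n → ℝ) → ℝ)
    (hT : ∀ y ∉ Set.range X.mulVec,
      T y = (y ⬝ᵥ (Cᵀ * B * C).mulVec y) / (∑ i, (C.mulVec y) i ^ 2))
    (e : Fin n → ℝ) (heX : e ∉ Set.range X.mulVec)
    (lam : ℝ) (heig : B.mulVec (C.mulVec e) = lam • C.mulVec e) :
    T e = lam ∧
    Tendsto
      (fun h : Fin n → ℝ =>
        (T (e + h) - T e -
            (∑ i, (C.mulVec e) i ^ 2)⁻¹ *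
              (h ⬝ᵥ (Cᵀ * B * C - lam • (Cᵀ * C)).mulVec h)) /
          (∑ i, h i ^ 2))
      (nhdsWithin 0 {(0 : Fin n → ℝ)}ᶜ) (nhds 0) := by
  have hq : ∀ y, ∑ i, (C *ᵥ y) i ^ 2 = y ⬝ᵥ (Cᵀ * C) *ᵥ y := fun y => by
    rw [dotProduct_transpose_mul_mulVec]
    simp only [dotProduct, sq]
  simp only [hq] at hT ⊢
  have hqe : 0 < e ⬝ᵥ (Cᵀ * C) *ᵥ e := by
    rw [dotProduct_transpose_mul_mulVec]
    refine lt_of_le_of_ne (Finset.sum_nonneg fun i _ => mul_self_nonneg _) (Ne.symm fun h0 => ?_)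
    rw [dotProduct_self_eq_zero] at h0
    exact heX ((hC2 e).mp (by rw [← mulVec_mulVec, h0, mulVec_zero]))
  have hMe : (Cᵀ * B * C) *ᵥ e = lam • (Cᵀ * C) *ᵥ e := by
    rw [← mulVec_mulVec, ← mulVec_mulVec, heig, mulVec_smul, mulVec_mulVec]
  have hMQ := (hB.transpose_mul_mul C).div_sub_eq_of_mulVec_eq_smul (isSymm_transpose_mul C) hMe
  set Q := Cᵀ * C
  set M := Cᵀ * B * C
  have hT_eq : ∀ y, y ⬝ᵥ Q *ᵥ y ≠ 0 → T y = y ⬝ᵥ M *ᵥ y / (y ⬝ᵥ Q *ᵥ y) := fun y hy =>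
    hT y fun hyX => hy (by rw [(hC2 y).mpr hyX, dotProduct_zero])
  have hTe : T e = lam := by
    simpa [hT_eq e hqe.ne', sub_eq_zero] using hMQ 0 (by simpa using hqe.ne')
  refine ⟨hTe, ?_⟩
  have hq_cont : Continuous fun h => (e + h) ⬝ᵥ Q *ᵥ (e + h) := by fun_prop
  have hq_near : ∀ᶠ h in 𝓝 0, (e + h) ⬝ᵥ Q *ᵥ (e + h) ≠ 0 :=
    hq_cont.continuousAt.eventually_ne (by simpa using hqe.ne')
  have hinv : Tendsto (fun h => ((e + h) ⬝ᵥ Q *ᵥ (e + h))⁻¹ - (e ⬝ᵥ Q *ᵥ e)⁻¹) (𝓝 0) (𝓝 0) := by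
    simpa using ((hq_cont.tendsto 0).inv₀ (by simpa using hqe.ne')).sub_const (e ⬝ᵥ Q *ᵥ e)⁻¹
  have hrem : ∀ᶠ h in 𝓝 0,
      (T (e + h) - T e - (e ⬝ᵥ Q *ᵥ e)⁻¹ * (h ⬝ᵥ (M - lam • Q) *ᵥ h)) / ∑ i, h i ^ 2 =
        (((e + h) ⬝ᵥ Q *ᵥ (e + h))⁻¹ - (e ⬝ᵥ Q *ᵥ e)⁻¹) *
          (h ⬝ᵥ (M - lam • Q) *ᵥ h / ∑ i, h i ^ 2) := by
    filter_upwards [hq_near] with h hh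
    rw [hT_eq _ hh, hTe, hMQ h hh]
    ring
  refine Tendsto.mono_left ?_ nhdsWithin_le_nhds
  exact (hinv.zero_mul_isBoundedUnder_le (isBoundedUnder_of
    ⟨_, fun h => abs_dotProduct_mulVec_self_div_le _ h⟩)).congr' (EventuallyEq.symm hrem)

/-- Quasi-Taylor expansion of `T_B` at a normalized vector `e ∉ span(X)` such that `C_X e` is
an eigenvector of `B` with eigenvalue `λ`: then `T_B(e) = λ` and
`T_B(e+h) = T_B(e) + D(h) + R(h)` with
`D(h) = ‖C_X e‖⁻² h'(C_X' B C_X − λ C_X' C_X)h` and `R(h)/‖h‖² → 0`. -/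
theorem stmt10 {n k : ℕ} (hn : 2 ≤ n) (hk : k < n)
    (X : Matrix (Fin n) (Fin k) ℝ) (hX : X.rank = k)
    (C : Matrix (Fin (n - k)) (Fin n) ℝ)
    (hC1 : C * Cᵀ = 1)
    (hC2 : ∀ v : Fin n → ℝ, (Cᵀ * C).mulVec v = 0 ↔ v ∈ Set.range X.mulVec)
    (B : Matrix (Fin (n - k)) (Fin (n - k)) ℝ) (hB : B.IsSymm)
    (T : (Fin n → ℝ) → ℝ)
    (hT : ∀ y ∉ Set.range X.mulVec,
      T y = (y ⬝ᵥ (Cᵀ * B * C).mulVec y) / (∑ i, (C.mulVec y) i ^ 2))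
    (e : Fin n → ℝ) (he : ∑ i, e i ^ 2 = 1) (heX : e ∉ Set.range X.mulVec)
    (lam : ℝ) (heig : B.mulVec (C.mulVec e) = lam • C.mulVec e) :
    T e = lam ∧
    Tendsto
      (fun h : Fin n → ℝ =>
        (T (e + h) - T e -
            (∑ i, (C.mulVec e) i ^ 2)⁻¹ *
              (h ⬝ᵥ (Cᵀ * B * C - lam • (Cᵀ * C)).mulVec h)) /
          (∑ i, h i ^ 2))
      (nhdsWithin 0 {(0 : Fin n → ℝ)}ᶜ) (nhds 0) :=
  stmt10_general X C hC2 B hB T hT e heX lam heig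
end

section
/- Let $Q$ be a probability measure on $\mathbb{R}^n$ absolutely continuous w.r.t. Lebesgue measure, and let $T_B$ be as defined (with $B$ symmetric, $C_X$ as usual, $T_B = \lambda_1(B)$ on $\mathrm{span}(X)$). Then the support of the pushforward $Q \circ T_B^{-1}$ is contained in $[\lambda_1(B), \lambda_{n-k}(B)]$, and if $\lambda_1(B) < \lambda_{n-k}(B)$, then $Q(\{y : T_B(y) = c\}) = 0$ for every $c \in \mathbb{R}$, i.e., the cumulative distribution function of $T_B$ under $Q$ is continuous. -/
/-!
With `w = C y`, `T y` is the Rayleigh quotient `wᵀ B w / wᵀ w` (or `λ₁` when `w = 0`), which lies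
between the extreme eigenvalues of `B`. Every level set `{T = c}` lies in the quadric
`yᵀ Cᵀ (B - c) C y = 0`, also on `span X`, where `C y = 0`. If `λ₁ < λ_{n-k}` then `B - c ≠ 0`,
hence `Cᵀ (B - c) C ≠ 0` since `C Cᵀ = 1`, and the zero set of a nonzero quadratic form is
Lebesgue-null: diagonalise it orthogonally and use Fubini along a coordinate with nonzero
coefficient, where every slice has at most two points.
-/

open Matrix Set MeasureTheory

namespace Matrix

variable {ι κ R : Type*} [Fintype ι] [Fintype κ]

theorem dotProduct_transpose_mul_mul_mulVec_s11 [CommSemiring R] (C : Matrix κ ι R)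
    (M : Matrix κ κ R) (y : ι → R) :
    y ⬝ᵥ (Cᵀ * M * C) *ᵥ y = (C *ᵥ y) ⬝ᵥ M *ᵥ (C *ᵥ y) := by
  rw [Matrix.mul_assoc, ← mulVec_mulVec, dotProduct_mulVec y, vecMul_transpose, mulVec_mulVec]

theorem dotProduct_sub_smul_one_mulVec_s11 [CommRing R] [DecidableEq ι] (B : Matrix ι ι R) (c : R)
    (v : ι → R) : v ⬝ᵥ (B - c • 1) *ᵥ v = v ⬝ᵥ B *ᵥ v - c * (v ⬝ᵥ v) := by
  rw [sub_mulVec, dotProduct_sub, smul_mulVec, one_mulVec, dotProduct_smul, smul_eq_mul]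

theorem mulVec_eq_zero_iff_of_mul_transpose_eq_one [Semiring R] [DecidableEq κ]
    {C : Matrix κ ι R} (hC : C * Cᵀ = 1) (y : ι → R) : C *ᵥ y = 0 ↔ (Cᵀ * C) *ᵥ y = 0 := by
  refine ⟨fun h => by rw [← mulVec_mulVec, h, mulVec_zero], fun h => ?_⟩
  rw [← one_mulVec (C *ᵥ y), ← hC, mulVec_mulVec, Matrix.mul_assoc, ← mulVec_mulVec, h,
    mulVec_zero]

theorem transpose_mul_mul_ne_zero_of_mul_transpose_eq_one [Semiring R] [DecidableEq κ]
    {C : Matrix κ ι R} (hC : C * Cᵀ = 1) {M : Matrix κ κ R} (hM : M ≠ 0) : Cᵀ * M * C ≠ 0 := by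
  intro h
  apply hM
  calc M = (C * Cᵀ) * M * (C * Cᵀ) := by rw [hC, Matrix.one_mul, Matrix.mul_one]
    _ = C * (Cᵀ * M * C) * Cᵀ := by simp only [Matrix.mul_assoc]
    _ = 0 := by rw [h, Matrix.mul_zero, Matrix.zero_mul]

theorem sub_smul_one_ne_zero_of_mulVec_eq_smul [Field R] [DecidableEq ι] {B : Matrix ι ι R}
    {s t : R} (hst : s ≠ t) {v w : ι → R} (hv : v ≠ 0) (hw : w ≠ 0) (hs : B *ᵥ v = s • v)
    (ht : B *ᵥ w = t • w) (c : R) : B - c • 1 ≠ 0 := by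
  intro h
  rw [sub_eq_zero.mp h, smul_mulVec, one_mulVec] at hs ht
  exact hst ((smul_left_injective R hv hs).symm.trans (smul_left_injective R hw ht))

variable [DecidableEq ι] {B : Matrix ι ι ℝ}

theorem IsHermitian.mul_dotProduct_self_le_dotProduct_mulVec (hB : B.IsHermitian) {lam : ℝ}
    (hlam : lam ∈ lowerBounds {t | ∃ v ≠ 0, B *ᵥ v = t • v}) (v : ι → ℝ) :
    lam * (v ⬝ᵥ v) ≤ v ⬝ᵥ B *ᵥ v := by
  have hM : (B - lam • 1).IsHermitian := hB.sub (isHermitian_one.smul (IsSelfAdjoint.all lam))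
  have hM_eig : ∀ i, 0 ≤ hM.eigenvalues i := by
    intro i
    have hw := hM.mulVec_eigenvectorBasis i
    set w : ι → ℝ := ⇑(hM.eigenvectorBasis i)
    have hw0 : w ≠ 0 := (WithLp.ofLp_eq_zero 2).ne.2 (hM.eigenvectorBasis.orthonormal.ne_zero i)
    rw [sub_mulVec, smul_mulVec, one_mulVec, sub_eq_iff_eq_add, ← add_smul] at hw
    linarith [hlam ⟨w, hw0, hw⟩]
  have hpsd := (hM.posSemidef_iff_eigenvalues_nonneg.mpr hM_eig).dotProduct_mulVec_nonneg v
  rw [star_trivial, dotProduct_sub_smul_one_mulVec_s11] at hpsd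
  linarith

theorem IsHermitian.dotProduct_mulVec_le_mul_dotProduct_self (hB : B.IsHermitian) {lam : ℝ}
    (hlam : lam ∈ upperBounds {t | ∃ v ≠ 0, B *ᵥ v = t • v}) (v : ι → ℝ) :
    v ⬝ᵥ B *ᵥ v ≤ lam * (v ⬝ᵥ v) := by
  have hneg : -lam ∈ lowerBounds {t | ∃ v ≠ 0, (-B) *ᵥ v = t • v} := by
    rintro t ⟨w, hw0, hw⟩
    rw [neg_mulVec, neg_eq_iff_eq_neg, ← neg_smul] at hw
    linarith [hlam ⟨w, hw0, hw⟩]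
  have := hB.neg.mul_dotProduct_self_le_dotProduct_mulVec hneg v
  rw [neg_mulVec, dotProduct_neg] at this
  linarith

theorem IsHermitian.dotProduct_mulVec_div_mem_Icc (hB : B.IsHermitian) {lam1 lamN : ℝ}
    (hlam1 : lam1 ∈ lowerBounds {t | ∃ v ≠ 0, B *ᵥ v = t • v})
    (hlamN : lamN ∈ upperBounds {t | ∃ v ≠ 0, B *ᵥ v = t • v}) {v : ι → ℝ} (hv : v ≠ 0) :
    (v ⬝ᵥ B *ᵥ v) / (v ⬝ᵥ v) ∈ Icc lam1 lamN := by
  have hpos : 0 < v ⬝ᵥ v := by simpa using dotProduct_self_star_pos_iff.2 hv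
  rw [mem_Icc, le_div_iff₀ hpos, div_le_iff₀ hpos]
  exact ⟨hB.mul_dotProduct_self_le_dotProduct_mulVec hlam1 v,
    hB.dotProduct_mulVec_le_mul_dotProduct_self hlamN v⟩

end Matrix

theorem Real.finite_setOf_mul_sq_add_eq_zero {a : ℝ} (ha : a ≠ 0) (r : ℝ) :
    {x : ℝ | a * x ^ 2 + r = 0}.Finite := by
  have hp : (Polynomial.C a * Polynomial.X ^ 2 + Polynomial.C r : Polynomial ℝ) ≠ 0 := by
    intro h
    simpa [Polynomial.coeff_C, ha] using congrArg (Polynomial.coeff · 2) h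
  convert Polynomial.finite_setOfPred_isRoot hp using 1
  ext x
  simp

theorem volume_setOf_sum_mul_sq_eq_zero {n : ℕ} {d : Fin n → ℝ} (hd : d ≠ 0) :
    volume {z : Fin n → ℝ | ∑ j, d j * z j ^ 2 = 0} = 0 := by
  obtain ⟨i, hi⟩ := Function.ne_iff.mp hd
  obtain ⟨m, rfl⟩ := Nat.exists_eq_add_one_of_ne_zero i.pos.ne'
  set s : Set (ℝ × (Fin m → ℝ)) := {p | d i * p.1 ^ 2 + ∑ j, d (i.succAbove j) * p.2 j ^ 2 = 0}
  have hs : MeasurableSet s := (isClosed_eq (by fun_prop) continuous_const).measurableSet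
  have hpre : {z : Fin (m + 1) → ℝ | ∑ j, d j * z j ^ 2 = 0}
      = MeasurableEquiv.piFinSuccAbove (fun _ => ℝ) i ⁻¹' s := by
    ext z
    simp only [mem_ofPred_eq, mem_preimage, Fin.sum_univ_succAbove _ i]
    rfl
  have hslice (y : Fin m → ℝ) : volume ((fun x => (x, y)) ⁻¹' s) = 0 :=
    (Real.finite_setOf_mul_sq_add_eq_zero hi (∑ j, d (i.succAbove j) * y j ^ 2)).measure_zero _
  rw [hpre, volume_pi, (measurePreserving_piFinSuccAbove (fun _ => volume) i).measure_preimage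
    hs.nullMeasurableSet, Measure.prod_apply_symm hs]
  simp [hslice]

theorem Matrix.IsHermitian.volume_setOf_dotProduct_mulVec_eq_zero {n : ℕ}
    {A : Matrix (Fin n) (Fin n) ℝ} (hA : A.IsHermitian) (hA0 : A ≠ 0) :
    volume {y : Fin n → ℝ | y ⬝ᵥ A *ᵥ y = 0} = 0 := by
  set U : Matrix (Fin n) (Fin n) ℝ := (hA.eigenvectorUnitary : Matrix (Fin n) (Fin n) ℝ)
  obtain ⟨d, hd, hA_eq⟩ : ∃ d : Fin n → ℝ, d ≠ 0 ∧ A = (star U)ᵀ * diagonal d * star U :=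
    ⟨hA.eigenvalues, fun h => hA0 (hA.eigenvalues_eq_zero_iff.mp h), by
      rw [star_eq_conjTranspose, conjTranspose_eq_transpose_of_trivial, transpose_transpose]
      exact hA.spectral_theorem⟩
  have hdet : LinearMap.det (toLin' (star U)) ≠ 0 := by
    rw [LinearMap.det_toLin']
    exact det_ne_zero_of_right_inverse (Unitary.coe_star_mul_self hA.eigenvectorUnitary)
  have hset : {y : Fin n → ℝ | y ⬝ᵥ A *ᵥ y = 0}
      = toLin' (star U) ⁻¹' {z | ∑ j, d j * z j ^ 2 = 0} := by
    ext y
    rw [mem_preimage, mem_ofPred_eq, mem_ofPred_eq, toLin'_apply, hA_eq,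
      dotProduct_transpose_mul_mul_mulVec_s11]
    simp only [dotProduct, mulVec_diagonal, sq, mul_left_comm]
  rw [hset, Measure.addHaar_preimage_linearMap volume hdet, volume_setOf_sum_mul_sq_eq_zero hd,
    mul_zero]

theorem stmt11_general {n k : ℕ}
    (X : Matrix (Fin n) (Fin k) ℝ)
    (C : Matrix (Fin (n - k)) (Fin n) ℝ)
    (hC1 : C * Cᵀ = 1)
    (hC2 : ∀ v : Fin n → ℝ, (Cᵀ * C).mulVec v = 0 ↔ v ∈ Set.range X.mulVec)
    (B : Matrix (Fin (n - k)) (Fin (n - k)) ℝ) (hB : B.IsSymm)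
    (lam1 lamN : ℝ)
    (hlam1 : IsLeast {t : ℝ | ∃ v ≠ 0, B.mulVec v = t • v} lam1)
    (hlamN : IsGreatest {t : ℝ | ∃ v ≠ 0, B.mulVec v = t • v} lamN)
    (T : (Fin n → ℝ) → ℝ)
    (hT1 : ∀ y ∉ Set.range X.mulVec,
      T y = (y ⬝ᵥ (Cᵀ * B * C).mulVec y) / (∑ i, (C.mulVec y) i ^ 2))
    (hT2 : ∀ y ∈ Set.range X.mulVec, T y = lam1)
    (Q : Measure (Fin n → ℝ))
    (hac : Q ≪ (volume : Measure (Fin n → ℝ))) :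
    Q {y : Fin n → ℝ | T y ∉ Set.Icc lam1 lamN} = 0 ∧
    (lam1 < lamN → ∀ c : ℝ, Q {y : Fin n → ℝ | T y = c} = 0) := by
  have hB' : B.IsHermitian := isHermitian_iff_isSymm.mpr hB
  have hCy (y : Fin n → ℝ) : C *ᵥ y = 0 ↔ y ∈ range X.mulVec :=
    (mulVec_eq_zero_iff_of_mul_transpose_eq_one hC1 y).trans (hC2 y)
  have hT (y : Fin n → ℝ) (hy : C *ᵥ y ≠ 0) :
      T y = ((C *ᵥ y) ⬝ᵥ B *ᵥ (C *ᵥ y)) / ((C *ᵥ y) ⬝ᵥ (C *ᵥ y)) := by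
    rw [hT1 y (mt (hCy y).2 hy), dotProduct_transpose_mul_mul_mulVec_s11]
    simp only [dotProduct, sq]
  refine ⟨measure_mono_null (fun y hy => hy ?_) measure_empty, fun hlt c => hac ?_⟩
  · by_cases hy : C *ᵥ y = 0
    · rw [hT2 y ((hCy y).1 hy)]
      exact ⟨le_rfl, hlamN.2 hlam1.1⟩
    · rw [hT y hy]
      exact hB'.dotProduct_mulVec_div_mem_Icc hlam1.2 hlamN.2 hy
  obtain ⟨v1, hv1, h1⟩ := hlam1.1
  obtain ⟨vN, hvN, hN⟩ := hlamN.1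
  have hBc : B - c • 1 ≠ 0 := sub_smul_one_ne_zero_of_mulVec_eq_smul hlt.ne hv1 hvN h1 hN c
  have hA : (Cᵀ * (B - c • 1) * C).IsHermitian := by
    simpa using isHermitian_conjTranspose_mul_mul C
      (hB'.sub (isHermitian_one.smul (IsSelfAdjoint.all c)))
  refine measure_mono_null (fun y hy => ?_) (hA.volume_setOf_dotProduct_mulVec_eq_zero
    (transpose_mul_mul_ne_zero_of_mul_transpose_eq_one hC1 hBc))
  rw [mem_ofPred_eq, dotProduct_transpose_mul_mul_mulVec_s11, dotProduct_sub_smul_one_mulVec_s11]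
  by_cases hy0 : C *ᵥ y = 0
  · simp [hy0]
  · rw [mem_ofPred_eq, hT y hy0, div_eq_iff (dotProduct_self_eq_zero.not.mpr hy0)] at hy
    rw [hy, sub_self]

/-- Lemma DT, Part 1: for an absolutely continuous probability measure `Q` on `ℝⁿ`, the
distribution of `T_B` under `Q` is supported in `[λ₁(B), λ_{n-k}(B)]`, and if
`λ₁(B) < λ_{n-k}(B)` its cumulative distribution function is continuous, i.e.
`Q{T_B = c} = 0` for every `c`. -/
theorem stmt11 {n k : ℕ} (hn : 2 ≤ n) (hk : k < n)
    (X : Matrix (Fin n) (Fin k) ℝ) (hX : X.rank = k)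
    (C : Matrix (Fin (n - k)) (Fin n) ℝ)
    (hC1 : C * Cᵀ = 1)
    (hC2 : ∀ v : Fin n → ℝ, (Cᵀ * C).mulVec v = 0 ↔ v ∈ Set.range X.mulVec)
    (B : Matrix (Fin (n - k)) (Fin (n - k)) ℝ) (hB : B.IsSymm)
    (lam1 lamN : ℝ)
    (hlam1 : IsLeast {t : ℝ | ∃ v ≠ 0, B.mulVec v = t • v} lam1)
    (hlamN : IsGreatest {t : ℝ | ∃ v ≠ 0, B.mulVec v = t • v} lamN)
    (T : (Fin n → ℝ) → ℝ)
    (hT1 : ∀ y ∉ Set.range X.mulVec,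
      T y = (y ⬝ᵥ (Cᵀ * B * C).mulVec y) / (∑ i, (C.mulVec y) i ^ 2))
    (hT2 : ∀ y ∈ Set.range X.mulVec, T y = lam1)
    (Q : Measure (Fin n → ℝ)) [IsProbabilityMeasure Q]
    (hac : Q ≪ (volume : Measure (Fin n → ℝ))) :
    Q {y : Fin n → ℝ | T y ∉ Set.Icc lam1 lamN} = 0 ∧
    (lam1 < lamN → ∀ c : ℝ, Q {y : Fin n → ℝ | T y = c} = 0) :=
  stmt11_general X C hC1 hC2 B hB lam1 lamN hlam1 hlamN T hT1 hT2 Q hac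
end

section
/- Let $A \in \mathbb{R}^{n\times n}$ be symmetric positive definite and $\delta \geq 0$. The following are equivalent: (i) $C_X A C_X' = \delta I_{n-k}$ for some matrix $C_X$ with $C_X C_X' = I_{n-k}$ and $C_X' C_X = \Pi_{\mathrm{span}(X)^{\perp}}$; (ii) the same holds for every such $C_X$; (iii) $\Pi_{\mathrm{span}(X)^{\perp}} A \Pi_{\mathrm{span}(X)^{\perp}} = \delta \Pi_{\mathrm{span}(X)^{\perp}}$; (iv) there exists a matrix $D$ with $DD' = A$ and $\Pi_{\mathrm{span}(X)^{\perp}} D = \delta^{1/2} \Pi_{\mathrm{span}(X)^{\perp}}$. -/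
/-!
An isometry `C` with `Cᵀ C = Π` and `C Cᵀ = 1` exists because `rank Π = n - k`, and for any such
`C` the identities `C A Cᵀ = δ I` and `Π A Π = δ Π` are obtained from each other by conjugating
with `C` or `Cᵀ`; this links (i), (ii) and (iii).

For (iii) ⇒ (iv) take `D = δ^{-1/2} A Π + W`, where `W` is the symmetric square root of
`F = A - δ⁻¹ A Π A = (1 - δ⁻¹ Π A)ᵀ A (1 - δ⁻¹ Π A) ≥ 0`. Since `Π A Π = δ Π` we get `Π F = 0`,
hence `Π W = W Π = 0`, and so `D Dᵀ = δ⁻¹ A Π A + F = A` and `Π D = δ^{-1/2} Π A Π = δ^{1/2} Π`.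
-/

open Matrix

namespace Matrix

variable {l m n : Type*} [Fintype n]

theorem rank_add_rank_eq_card_of_ker_eq_range {K : Type*} [Field K] [Fintype l]
    (P : Matrix m n K) (X : Matrix n l K)
    (h : LinearMap.ker P.mulVecLin = LinearMap.range X.mulVecLin) :
    P.rank + X.rank = Fintype.card n := by
  unfold rank
  rw [← h, LinearMap.finrank_range_add_finrank_ker, Module.finrank_fintype_fun_eq_card]

omit [Fintype n] in
theorem transpose_mul_eq_sum_vecMulVec {R : Type*} [Fintype m] [CommSemiring R]
    (C : Matrix m n R) : Cᵀ * C = ∑ i, vecMulVec (C i) (C i) := by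
  ext a b
  simp [mul_apply, vecMulVec_apply, Matrix.sum_apply]

theorem mul_mul_transpose_eq_smul_one_iff {R : Type*} [CommSemiring R] [Fintype m]
    [DecidableEq m] {C : Matrix m n R} {P A : Matrix n n R} (hCCt : C * Cᵀ = 1)
    (hCtC : Cᵀ * C = P) (δ : R) : C * A * Cᵀ = δ • (1 : Matrix m m R) ↔ P * A * P = δ • P := by
  constructor
  · intro h
    calc P * A * P = Cᵀ * (C * A * Cᵀ) * C := by simp only [← hCtC, Matrix.mul_assoc]
      _ = δ • P := by rw [h, Matrix.mul_smul, Matrix.mul_one, Matrix.smul_mul, hCtC]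
  · intro h
    calc C * A * Cᵀ = C * Cᵀ * C * A * (Cᵀ * C * Cᵀ) := by
          rw [hCCt, Matrix.one_mul, Matrix.mul_assoc Cᵀ C Cᵀ, hCCt, Matrix.mul_one]
      _ = C * (P * A * P) * Cᵀ := by simp only [← hCtC, Matrix.mul_assoc]
      _ = δ • 1 := by
          rw [h, Matrix.mul_smul, Matrix.smul_mul, ← hCtC, ← Matrix.mul_assoc, hCCt,
            Matrix.one_mul, hCCt]

theorem mul_mul_eq_smul_of_mul_transpose_eq {P A D : Matrix n n ℝ} (hP : P.IsSymm)
    (hPP : P * P = P) {δ : ℝ} (hδ : 0 ≤ δ) (hDD : D * Dᵀ = A) (hPD : P * D = √δ • P) :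
    P * A * P = δ • P := by
  calc P * A * P = (P * D) * (P * D)ᵀ := by
        rw [← hDD, transpose_mul, hP.eq]
        simp only [Matrix.mul_assoc]
    _ = δ • P := by
        rw [hPD, transpose_smul, hP.eq, Matrix.smul_mul, Matrix.mul_smul, smul_smul,
          Real.mul_self_sqrt hδ, hPP]

open scoped ComplexOrder MatrixOrder in
theorem PosSemidef.mul_eq_zero_of_conjTranspose_mul_mul_eq_zero {𝕜 : Type*} [RCLike 𝕜]
    {A : Matrix n n 𝕜} (hA : A.PosSemidef) {B : Matrix n m 𝕜} (h : Bᴴ * A * B = 0) :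
    A * B = 0 := by
  classical
  obtain ⟨R, rfl⟩ := CStarAlgebra.nonneg_iff_eq_star_mul_self.mp hA.nonneg
  have hRB : (R * B)ᴴ * (R * B) = 0 := by
    rw [conjTranspose_mul, ← h, star_eq_conjTranspose]
    simp only [Matrix.mul_assoc]
  rw [Matrix.mul_assoc, conjTranspose_mul_self_eq_zero.mp hRB, Matrix.mul_zero]

variable [DecidableEq n]

theorem exists_mul_transpose_eq_one_and_transpose_mul_eq [Fintype m] [DecidableEq m]
    {P : Matrix n n ℝ} (hP : P.IsSymm) (hPP : P * P = P) (hm : Fintype.card m = P.rank) :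
    ∃ C : Matrix m n ℝ, C * Cᵀ = 1 ∧ Cᵀ * C = P := by
  set p := toEuclideanCLM (𝕜 := ℝ) P
  have hp : IsStarProjection p := IsStarProjection.map
    ⟨hPP, by simpa [IsSelfAdjoint, star_eq_conjTranspose] using hP.eq⟩ toEuclideanCLM
  -- `p` is the orthogonal projection onto its range, hence `∑ bᵢ bᵢᵀ` for an orthonormal basis `b`
  -- of the range; the `bᵢ` are the rows of `C`.
  obtain ⟨_, hp_eq⟩ := isStarProjection_iff_eq_starProjection_range.mp hp
  have hrank : Fintype.card m = Module.finrank ℝ p.range := by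
    rw [hm, rank_eq_finrank_range_toLin P (PiLp.basisFun 2 ℝ n) (PiLp.basisFun 2 ℝ n)]
    rfl
  let b : OrthonormalBasis m ℝ p.range :=
    (stdOrthonormalBasis ℝ p.range).reindex (Fintype.equivFinOfCardEq hrank).symm
  refine ⟨Matrix.of fun i => (b i : EuclideanSpace ℝ n).ofLp, ?_, ?_⟩
  · ext i j
    have hb := (orthonormal_iff_ite.mp b.orthonormal) i j
    rw [Submodule.coe_inner, PiLp.inner_apply] at hb
    simp only [mul_apply, one_apply, transpose_apply, of_apply]
    rw [← hb]
    exact Finset.sum_congr rfl fun l _ => mul_comm _ _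
  · have hP_sum := congrArg
      (fun q : EuclideanSpace ℝ n →L[ℝ] EuclideanSpace ℝ n => toEuclideanLin.symm q.toLinearMap)
      (hp_eq.trans b.starProjection_eq_sum_rankOne)
    simp only [ContinuousLinearMap.toLinearMap_sum, map_sum,
      InnerProductSpace.symm_toEuclideanLin_rankOne] at hP_sum
    have hpP : toEuclideanLin.symm p.toLinearMap = P := by
      rw [coe_toEuclideanCLM_eq_toEuclideanLin, LinearEquiv.symm_apply_apply]
    rw [hpP] at hP_sum
    rw [hP_sum, transpose_mul_eq_sum_vecMulVec]
    simp only [star_trivial]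
    rfl

open scoped MatrixOrder in
theorem PosSemidef.exists_symm_sqrt_mul_eq_zero {F P : Matrix n n ℝ} (hF : F.PosSemidef)
    (hFP : F * P = 0) : ∃ W : Matrix n n ℝ, W * W = F ∧ Wᵀ = W ∧ W * P = 0 := by
  have hW : (CFC.sqrt F)ᵀ = CFC.sqrt F := (CFC.sqrt_nonneg F).posSemidef.isHermitian.eq
  refine ⟨CFC.sqrt F, CFC.sqrt_mul_sqrt_self F hF.nonneg, hW, ?_⟩
  refine conjTranspose_mul_self_eq_zero.mp ?_
  rw [conjTranspose_eq_transpose_of_trivial, transpose_mul, hW, Matrix.mul_assoc,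
    ← Matrix.mul_assoc (CFC.sqrt F), CFC.sqrt_mul_sqrt_self F hF.nonneg, hFP, Matrix.mul_zero]

theorem one_sub_smul_mul_mul_one_sub_smul_mul (A P : Matrix n n ℝ) (a : ℝ) :
    (1 - a • (A * P)) * A * (1 - a • (P * A))
      = A - (2 * a) • (A * P * A) + (a * a) • (A * (P * A * P) * A) := by
  simp only [mul_sub, sub_mul, Matrix.smul_mul, Matrix.mul_smul, Matrix.mul_one, Matrix.one_mul,
    smul_smul, Matrix.mul_assoc]
  module

theorem exists_mul_transpose_eq_and_mul_eq_sqrt_smul {P A : Matrix n n ℝ} (hP : P.IsSymm)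
    (hPP : P * P = P) (hA : A.PosSemidef) {δ : ℝ} (hδ : 0 ≤ δ) (h : P * A * P = δ • P) :
    ∃ D : Matrix n n ℝ, D * Dᵀ = A ∧ P * D = √δ • P := by
  have hAt : Aᵀ = A := hA.isHermitian.eq
  have hinv : δ⁻¹ * δ⁻¹ * δ = δ⁻¹ := by
    rw [← mul_inv, mul_comm, ← div_eq_mul_inv, div_self_mul_self']
  have hsqrt_inv : (√δ)⁻¹ * (√δ)⁻¹ = δ⁻¹ := by rw [← mul_inv, Real.mul_self_sqrt hδ]
  have hsqrt : (√δ)⁻¹ * δ = √δ := by rw [inv_mul_eq_div, Real.div_sqrt]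
  set F := A - δ⁻¹ • (A * P * A) with hF
  -- For `δ = 0` we have `F = A` because `0⁻¹ = 0`, and then `P A = 0` comes from positivity.
  have hPF : P * F = 0 := by
    rcases hδ.eq_or_lt with rfl | hpos
    · have hAP : A * P = 0 := hA.mul_eq_zero_of_conjTranspose_mul_mul_eq_zero <| by
        rw [conjTranspose_eq_transpose_of_trivial, hP.eq, h, zero_smul]
      have hPA : P * A = 0 := by simpa [hP.eq, hAt] using congrArg transpose hAP
      simp [F, hPA]
    · rw [hF, mul_sub, Matrix.mul_smul, ← Matrix.mul_assoc, ← Matrix.mul_assoc, h,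
        Matrix.smul_mul, smul_smul, inv_mul_cancel₀ hpos.ne', one_smul, sub_self]
  have hF_psd : F.PosSemidef := by
    have hF_eq : F = (1 - δ⁻¹ • (P * A))ᴴ * A * (1 - δ⁻¹ • (P * A)) := by
      rw [conjTranspose_eq_transpose_of_trivial, transpose_sub, transpose_one, transpose_smul,
        transpose_mul, hAt, hP.eq, one_sub_smul_mul_mul_one_sub_smul_mul, h, Matrix.mul_smul,
        Matrix.smul_mul, smul_smul, hinv]
      module
    rw [hF_eq]
    exact hA.conjTranspose_mul_mul_same _
  obtain ⟨W, hWW, hWt, hWP⟩ := hF_psd.exists_symm_sqrt_mul_eq_zero <| by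
    simpa [hF, hP.eq, hAt, Matrix.mul_assoc] using congrArg transpose hPF
  have hPW : P * W = 0 := by simpa [hP.eq, hWt] using congrArg transpose hWP
  refine ⟨(√δ)⁻¹ • (A * P) + W, ?_, ?_⟩
  · rw [transpose_add, transpose_smul, transpose_mul, hP.eq, hAt, hWt]
    calc ((√δ)⁻¹ • (A * P) + W) * ((√δ)⁻¹ • (P * A) + W)
        = ((√δ)⁻¹ * (√δ)⁻¹) • (A * (P * P) * A) + (√δ)⁻¹ • (A * (P * W))
          + (√δ)⁻¹ • (W * P * A) + W * W := by
          simp only [add_mul, mul_add, Matrix.smul_mul, Matrix.mul_smul, smul_smul,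
            Matrix.mul_assoc]
          module
      _ = A := by
        rw [hPP, hPW, hWP, hWW, hsqrt_inv, hF]
        simp
  · rw [mul_add, Matrix.mul_smul, ← Matrix.mul_assoc, h, hPW, add_zero, smul_smul, hsqrt]

end Matrix

theorem stmt12_general {n k : ℕ}
    (X : Matrix (Fin n) (Fin k) ℝ) (hX : X.rank = k)
    (P : Matrix (Fin n) (Fin n) ℝ) (hPsymm : P.IsSymm) (hPidem : P * P = P)
    (hPker : ∀ v : Fin n → ℝ, P.mulVec v = 0 ↔ v ∈ Set.range X.mulVec)
    (A : Matrix (Fin n) (Fin n) ℝ) (hA : A.PosDef)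
    (δ : ℝ) (hδ : 0 ≤ δ) :
    List.TFAE
      [ ∃ C : Matrix (Fin (n - k)) (Fin n) ℝ,
          C * Cᵀ = 1 ∧ Cᵀ * C = P ∧ C * A * Cᵀ = δ • (1 : Matrix (Fin (n - k)) (Fin (n - k)) ℝ),
        ∀ C : Matrix (Fin (n - k)) (Fin n) ℝ,
          C * Cᵀ = 1 → Cᵀ * C = P → C * A * Cᵀ = δ • (1 : Matrix (Fin (n - k)) (Fin (n - k)) ℝ),
        P * A * P = δ • P,
        ∃ D : Matrix (Fin n) (Fin n) ℝ, D * Dᵀ = A ∧ P * D = Real.sqrt δ • P ] := by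
  have hrank : Fintype.card (Fin (n - k)) = P.rank := by
    have := rank_add_rank_eq_card_of_ker_eq_range P X <| by
      ext v
      exact hPker v
    simp only [Fintype.card_fin] at this ⊢
    omega
  obtain ⟨C₀, hC₀C₀t, hC₀tC₀⟩ :=
    exists_mul_transpose_eq_one_and_transpose_mul_eq hPsymm hPidem hrank
  tfae_have 1 → 3 := fun ⟨C, hCCt, hCtC, hCAC⟩ =>
    (mul_mul_transpose_eq_smul_one_iff hCCt hCtC δ).mp hCAC
  tfae_have 3 → 2 := fun hPAP C hCCt hCtC =>
    (mul_mul_transpose_eq_smul_one_iff hCCt hCtC δ).mpr hPAP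
  tfae_have 2 → 1 := fun h => ⟨C₀, hC₀C₀t, hC₀tC₀, h C₀ hC₀C₀t hC₀tC₀⟩
  tfae_have 3 → 4 :=
    exists_mul_transpose_eq_and_mul_eq_sqrt_smul hPsymm hPidem hA.posSemidef hδ
  tfae_have 4 → 3 := fun ⟨D, hDD, hPD⟩ =>
    mul_mul_eq_smul_of_mul_transpose_eq hPsymm hPidem hδ hDD hPD
  tfae_finish

/-- Lemma auxid: for a symmetric positive definite `A` and `δ ≥ 0`, the conditions
(i) `C_X A C_X' = δ I` for some `C_X`, (ii) the same for every `C_X`,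
(iii) `Π A Π = δ Π`, and (iv) `∃ D, D D' = A ∧ Π D = √δ Π` are equivalent, where
`Π = Π_{span(X)⊥}` is the orthogonal projection onto `span(X)⊥`. -/
theorem stmt12 {n k : ℕ} (hn : 2 ≤ n) (hk : k < n)
    (X : Matrix (Fin n) (Fin k) ℝ) (hX : X.rank = k)
    (P : Matrix (Fin n) (Fin n) ℝ) (hPsymm : P.IsSymm) (hPidem : P * P = P)
    (hPker : ∀ v : Fin n → ℝ, P.mulVec v = 0 ↔ v ∈ Set.range X.mulVec)
    (A : Matrix (Fin n) (Fin n) ℝ) (hA : A.PosDef)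
    (δ : ℝ) (hδ : 0 ≤ δ) :
    List.TFAE
      [ ∃ C : Matrix (Fin (n - k)) (Fin n) ℝ,
          C * Cᵀ = 1 ∧ Cᵀ * C = P ∧ C * A * Cᵀ = δ • (1 : Matrix (Fin (n - k)) (Fin (n - k)) ℝ),
        ∀ C : Matrix (Fin (n - k)) (Fin n) ℝ,
          C * Cᵀ = 1 → Cᵀ * C = P → C * A * Cᵀ = δ • (1 : Matrix (Fin (n - k)) (Fin (n - k)) ℝ),
        P * A * P = δ • P,
        ∃ D : Matrix (Fin n) (Fin n) ℝ, D * Dᵀ = A ∧ P * D = Real.sqrt δ • P ] :=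
  stmt12_general X hX P hPsymm hPidem hPker A hA δ hδ
end

section
/- Let $W$ be an $n \times n$ real matrix with a positive real eigenvalue $\lambda_{\max}$ of algebraic multiplicity one dominating in absolute value all other eigenvalues, with zero diagonal and $W$ not the zero matrix, and let $\Sigma_{SEM}(\rho) = [(I_n - \rho W')(I_n - \rho W)]^{-1}$ for $\rho \in [0, \lambda_{\max}^{-1})$. If $\sigma_1^2 \Sigma_{SEM}(\rho_1) = \sigma_2^2 \Sigma_{SEM}(\rho_2)$ for $\rho_1, \rho_2 \in [0, \lambda_{\max}^{-1})$ and $\sigma_1, \sigma_2 \in (0, \infty)$, then $\rho_1 = \rho_2$ and $\sigma_1 = \sigma_2$. -/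
/-!
Write `A(ρ) = (1 - ρW)ᵀ(1 - ρW)`; the hypothesis is equivalent to `σ₂² A(ρ₁) = σ₁² A(ρ₂)`.
Testing this against the eigenvector `f` of `λ` (where `A(ρ)` acts as `(1 - ρλ)²`) and taking
traces (where `tr A(ρ) = n + ρ² tr(WᵀW)` because `W` has zero diagonal) gives two scalar
equations. Dividing them eliminates the variances and leaves
`(n + ρ₁² t) / (1 - ρ₁λ)² = (n + ρ₂² t) / (1 - ρ₂λ)²` with `t = tr(WᵀW) > 0`, a strictly
increasing function of `ρ` on `[0, 1/λ)`. As no eigenvalue of `W` exceeds `λ` in modulus,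
`1 - ρW` is invertible for these `ρ`.
-/

open Matrix

section

variable {ι : Type*} [Fintype ι] [DecidableEq ι]

theorem ofReal_mem_spectrum_map_ofReal {W : Matrix ι ι ℝ} {r : ℝ} (h : r ∈ spectrum ℝ W) :
    (r : ℂ) ∈ spectrum ℂ (W.map Complex.ofReal) := by
  rw [mem_spectrum_iff_isRoot_charpoly] at h ⊢
  exact charpoly_map W Complex.ofRealHom ▸ h.map

theorem isUnit_one_sub_smul_of_spectrum_norm_le {W : Matrix ι ι ℝ} {l ρ : ℝ}
    (hdom : ∀ μ ∈ spectrum ℂ (W.map Complex.ofReal), ‖μ‖ ≤ l) (hρ : 0 ≤ ρ) (hρl : ρ * l < 1) :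
    IsUnit (1 - ρ • W) := by
  rcases hρ.eq_or_lt with rfl | hρ
  · simp
  by_contra hW
  have hmem : ρ⁻¹ ∈ spectrum ℝ W := by
    rw [spectrum.mem_iff, Algebra.algebraMap_eq_smul_one,
      show ρ⁻¹ • (1 : Matrix ι ι ℝ) - W = ρ⁻¹ • (1 - ρ • W) by
        rw [smul_sub, smul_smul, inv_mul_cancel₀ hρ.ne', one_smul]]
    rwa [← Units.smul_mk0 (inv_ne_zero hρ.ne'), isUnit_smul_iff]
  have := hdom _ (ofReal_mem_spectrum_map_ofReal hmem)
  rw [Complex.norm_real, Real.norm_of_nonneg (inv_nonneg.2 hρ.le),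
    inv_le_iff_one_le_mul₀' hρ] at this
  linarith

theorem trace_transpose_mul_self_pos {m n : Type*} [Fintype m] [Fintype n] {W : Matrix m n ℝ}
    (hW : W ≠ 0) : 0 < (Wᵀ * W).trace := by
  rw [← conjTranspose_eq_transpose_of_trivial]
  exact (posSemidef_conjTranspose_mul_self W).trace_nonneg.lt_of_ne'
    (trace_conjTranspose_mul_self_eq_zero_iff.not.2 hW)

theorem smul_eq_smul_of_smul_inv_eq {R : Type*} [CommRing R] {A B : Matrix ι ι R} {a b : R}
    (hA : IsUnit A) (hB : IsUnit B) (h : a • A⁻¹ = b • B⁻¹) : b • A = a • B := by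
  rw [isUnit_iff_isUnit_det] at hA hB
  calc b • A = A * (b • B⁻¹) * B := by
        rw [Matrix.mul_smul, Matrix.smul_mul, mul_assoc, nonsing_inv_mul B hB, mul_one]
    _ = A * (a • A⁻¹) * B := by rw [h]
    _ = a • B := by rw [Matrix.mul_smul, Matrix.smul_mul, mul_nonsing_inv A hA, one_mul]

/-- `Σ_SEM(ρ)⁻¹`. -/
def semPrecision (W : Matrix ι ι ℝ) (ρ : ℝ) : Matrix ι ι ℝ := (1 - ρ • W)ᵀ * (1 - ρ • W)

theorem isUnit_semPrecision {W : Matrix ι ι ℝ} {ρ : ℝ} (h : IsUnit (1 - ρ • W)) :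
    IsUnit (semPrecision W ρ) :=
  (isUnit_transpose _).2 h |>.mul h

theorem dotProduct_semPrecision_mulVec_of_mulVec_eq {W : Matrix ι ι ℝ} {f : ι → ℝ} {l : ℝ}
    (hWf : W *ᵥ f = l • f) (ρ : ℝ) :
    f ⬝ᵥ semPrecision W ρ *ᵥ f = (1 - ρ * l) ^ 2 * (f ⬝ᵥ f) := by
  have hf : (1 - ρ • W) *ᵥ f = (1 - ρ * l) • f := by
    rw [sub_mulVec, one_mulVec, smul_mulVec, hWf, sub_smul, one_smul, smul_smul]
  rw [semPrecision, ← mulVec_mulVec, dotProduct_mulVec, vecMul_transpose, hf, smul_dotProduct,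
    dotProduct_smul, smul_eq_mul, smul_eq_mul]
  ring

theorem trace_semPrecision {W : Matrix ι ι ℝ} (hW : W.trace = 0) (ρ : ℝ) :
    (semPrecision W ρ).trace = Fintype.card ι + ρ ^ 2 * (Wᵀ * W).trace := by
  simp only [semPrecision, transpose_sub, transpose_one, transpose_smul, sub_mul, mul_sub,
    one_mul, mul_one, Matrix.smul_mul, Matrix.mul_smul, trace_sub, trace_one, trace_smul,
    trace_transpose, hW, smul_eq_mul, smul_smul]
  ring

theorem eq_and_eq_of_sem_moments {N t l ρ₁ ρ₂ s₁ s₂ : ℝ} (hN : 0 ≤ N) (ht : 0 < t) (hl : 0 ≤ l)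
    (hρ₁ : 0 ≤ ρ₁) (hρ₁l : ρ₁ * l < 1) (hρ₂ : 0 ≤ ρ₂) (hρ₂l : ρ₂ * l < 1)
    (hs₂ : 0 < s₂)
    (hquad : s₂ * (1 - ρ₁ * l) ^ 2 = s₁ * (1 - ρ₂ * l) ^ 2)
    (htr : s₂ * (N + ρ₁ ^ 2 * t) = s₁ * (N + ρ₂ ^ 2 * t)) :
    ρ₁ = ρ₂ ∧ s₁ = s₂ := by
  have hcross : (N + ρ₁ ^ 2 * t) * (1 - ρ₂ * l) ^ 2 = (N + ρ₂ ^ 2 * t) * (1 - ρ₁ * l) ^ 2 := by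
    apply mul_left_cancel₀ hs₂.ne'
    linear_combination (1 - ρ₂ * l) ^ 2 * htr - (N + ρ₂ ^ 2 * t) * hquad
  have hρ : ρ₁ = ρ₂ := by
    by_contra hne
    have hfac : N * l * ((1 - ρ₁ * l) + (1 - ρ₂ * l))
        + t * (ρ₁ * (1 - ρ₂ * l) + ρ₂ * (1 - ρ₁ * l)) = 0 :=
      (mul_eq_zero.1 (by linear_combination hcross : (ρ₁ - ρ₂) * _ = 0)).resolve_left
        (sub_ne_zero.2 hne)
    have ha₁ : 0 < 1 - ρ₁ * l := by linarith
    have ha₂ : 0 < 1 - ρ₂ * l := by linarith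
    have hzero : ρ₁ * (1 - ρ₂ * l) + ρ₂ * (1 - ρ₁ * l) = 0 := by
      refine (mul_eq_zero.1 ?_).resolve_left ht.ne'
      linarith [mul_nonneg (mul_nonneg hN hl) (add_pos ha₁ ha₂).le,
        mul_nonneg ht.le (add_nonneg (mul_nonneg hρ₁ ha₂.le) (mul_nonneg hρ₂ ha₁.le))]
    obtain ⟨h₁, h₂⟩ := (add_eq_zero_iff_of_nonneg (by positivity) (by positivity)).1 hzero
    exact hne (by rw [(mul_eq_zero.1 h₁).resolve_right ha₂.ne',
      (mul_eq_zero.1 h₂).resolve_right ha₁.ne'])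
  subst hρ
  refine ⟨rfl, (mul_right_cancel₀ (by positivity : (1 - ρ₁ * l) ^ 2 ≠ 0) hquad).symm⟩

end

theorem stmt13_general {n : ℕ}
    (W : Matrix (Fin n) (Fin n) ℝ) (hdiag : ∀ i, W i i = 0) (hW0 : W ≠ 0)
    (lmax : ℝ) (hl : 0 < lmax)
    (f : Fin n → ℝ) (hf : f ≠ 0) (hWf : W.mulVec f = lmax • f)
    (hdom : ∀ μ : ℂ, μ ∈ spectrum ℂ (W.map (Complex.ofReal)) → ‖μ‖ ≤ lmax)
    (σ₁ σ₂ ρ₁ ρ₂ : ℝ) (hσ₁ : 0 < σ₁) (hσ₂ : 0 < σ₂)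
    (hρ₁ : ρ₁ ∈ Set.Ico (0:ℝ) lmax⁻¹) (hρ₂ : ρ₂ ∈ Set.Ico (0:ℝ) lmax⁻¹)
    (heq : σ₁ ^ 2 • ((1 - ρ₁ • W)ᵀ * (1 - ρ₁ • W))⁻¹
         = σ₂ ^ 2 • ((1 - ρ₂ • W)ᵀ * (1 - ρ₂ • W))⁻¹) :
    ρ₁ = ρ₂ ∧ σ₁ = σ₂ := by
  obtain ⟨hρ₁0, hρ₁l⟩ := hρ₁
  obtain ⟨hρ₂0, hρ₂l⟩ := hρ₂
  rw [inv_eq_one_div, lt_div_iff₀ hl] at hρ₁l hρ₂l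
  have hunit (ρ : ℝ) (h0 : 0 ≤ ρ) (hlt : ρ * lmax < 1) : IsUnit (semPrecision W ρ) :=
    isUnit_semPrecision (isUnit_one_sub_smul_of_spectrum_norm_le hdom h0 hlt)
  have hprec := smul_eq_smul_of_smul_inv_eq (hunit ρ₁ hρ₁0 hρ₁l) (hunit ρ₂ hρ₂0 hρ₂l) heq
  have hquad := congrArg (fun M => f ⬝ᵥ M *ᵥ f) hprec
  simp only [smul_mulVec, dotProduct_smul, smul_eq_mul,
    dotProduct_semPrecision_mulVec_of_mulVec_eq hWf] at hquad
  have htrW : W.trace = 0 := Finset.sum_eq_zero fun i _ => hdiag i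
  have htr := congrArg trace hprec
  simp only [trace_smul, smul_eq_mul, trace_semPrecision htrW] at htr
  have hff : f ⬝ᵥ f ≠ 0 := fun h => hf (dotProduct_self_eq_zero.1 h)
  obtain ⟨hρ, hσ⟩ := eq_and_eq_of_sem_moments (Nat.cast_nonneg _)
    (trace_transpose_mul_self_pos hW0) hl.le hρ₁0 hρ₁l hρ₂0 hρ₂l (by positivity)
    (mul_right_cancel₀ hff (by linear_combination hquad)) htr
  exact ⟨hρ, (sq_eq_sq₀ hσ₁.le hσ₂.le).1 hσ⟩

/-- Identifiability in the spatial error model: if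
`σ₁² Σ_SEM(ρ₁) = σ₂² Σ_SEM(ρ₂)` with `Σ_SEM(ρ) = [(I - ρW')(I - ρW)]⁻¹`, then
`ρ₁ = ρ₂` and `σ₁ = σ₂`. -/
theorem stmt13 {n : ℕ} (hn : 2 ≤ n)
    (W : Matrix (Fin n) (Fin n) ℝ) (hdiag : ∀ i, W i i = 0) (hW0 : W ≠ 0)
    (lmax : ℝ) (hl : 0 < lmax)
    (f : Fin n → ℝ) (hf : f ≠ 0) (hWf : W.mulVec f = lmax • f)
    (hmult : (Matrix.charpoly W).rootMultiplicity lmax = 1)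
    (hdom : ∀ μ : ℂ, μ ∈ spectrum ℂ (W.map (Complex.ofReal)) → ‖μ‖ ≤ lmax)
    (σ₁ σ₂ ρ₁ ρ₂ : ℝ) (hσ₁ : 0 < σ₁) (hσ₂ : 0 < σ₂)
    (hρ₁ : ρ₁ ∈ Set.Ico (0:ℝ) lmax⁻¹) (hρ₂ : ρ₂ ∈ Set.Ico (0:ℝ) lmax⁻¹)
    (heq : σ₁ ^ 2 • ((1 - ρ₁ • W)ᵀ * (1 - ρ₁ • W))⁻¹
         = σ₂ ^ 2 • ((1 - ρ₂ • W)ᵀ * (1 - ρ₂ • W))⁻¹) :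
    ρ₁ = ρ₂ ∧ σ₁ = σ₂ :=
  stmt13_general W hdiag hW0 lmax hl f hf hWf hdom σ₁ σ₂ ρ₁ ρ₂ hσ₁ hσ₂ hρ₁ hρ₂ heq
end

section
/- Let $W$ be as in the SEM assumptions with dominant eigenvalue $\lambda_{\max} > 0$ of algebraic multiplicity one and normalized eigenvector $f_{\max}$. Then for every $\rho \in [0, \lambda_{\max}^{-1})$ the matrix $(I_n - \rho W)^{-1}$ equals the norm-convergent series $\sum_{j=0}^{\infty} \rho^j W^j$, and $\Pi_{\mathrm{span}(f_{\max})^{\perp}} (I_n - \rho W)^{-1} = (I_n - \rho \Pi_{\mathrm{span}(f_{\max})^{\perp}} W)^{-1} - \Pi_{\mathrm{span}(f_{\max})}$; moreover this converges as $\rho \to \lambda_{\max}^{-1}$ to $\Lambda = (I_n - \lambda_{\max}^{-1}\Pi_{\mathrm{span}(f_{\max})^{\perp}} W)^{-1} - \Pi_{\mathrm{span}(f_{\max})}$, which is well-defined and injective when restricted to $\mathrm{span}(f_{\max})^{\perp}$. -/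
/-! With `P = f fᵀ` and `Q = 1 - P`, the relation `W f = λ f` gives `Q W P = 0`, and this alone
turns `Q (1 - ρW)⁻¹ + P` into a right inverse of `1 - ρ Q W`.

The Neumann series converges because the complex spectral radius of `W` is at most `λ`: the
resolvent `z ↦ (1 - z W)⁻¹` is holomorphic on the disc of radius `1 / λ`, so its Taylor series
`∑ zʲ Wʲ` converges there.

For the limit `ρ → λ⁻¹`, note that `Q W` has the characteristic polynomial of the deflated matrix
`W Q = W - λ P`, and `(t - (W - λP)) (1 + (t - λ - 1) P) = (t - W) (1 + (t - 1) P)` gives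
`(X - λ) χ_{W - λP} = X χ_W`. As `λ ≠ 0` is a simple root of `χ_W`, it is no root of `χ_{QW}`, so
`1 - λ⁻¹ Q W` is invertible and continuity of inversion yields the limit. Injectivity on `f⊥`
follows because `P` vanishes there. -/

open Matrix Filter Set
open scoped ENNReal NNReal

theorem spectrum.nnnorm_lt_inv_spectralRadius_of_forall_norm_le {𝕜 A : Type*} [NormedField 𝕜]
    [Ring A] [Algebra 𝕜 A] {a : A} {r : ℝ} (hr : 0 < r) (h : ∀ μ ∈ spectrum 𝕜 a, ‖μ‖ ≤ r) {z : 𝕜}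
    (hz : ‖z‖ < r⁻¹) : (‖z‖₊ : ℝ≥0∞) < (spectralRadius 𝕜 a)⁻¹ := by
  have hle : spectralRadius 𝕜 a ≤ ENNReal.ofReal r := iSup₂_le fun μ hμ => by
    rw [← ENNReal.ofReal_coe_nnreal, coe_nnnorm]
    exact ENNReal.ofReal_le_ofReal (h μ hμ)
  calc (‖z‖₊ : ℝ≥0∞) = ENNReal.ofReal ‖z‖ := by rw [← ENNReal.ofReal_coe_nnreal, coe_nnnorm]
    _ < ENNReal.ofReal r⁻¹ := (ENNReal.ofReal_lt_ofReal_iff (inv_pos.mpr hr)).mpr hz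
    _ = (ENNReal.ofReal r)⁻¹ := ENNReal.ofReal_inv_of_pos hr
    _ ≤ (spectralRadius 𝕜 a)⁻¹ := ENNReal.inv_le_inv.mpr hle

theorem spectrum.hasSum_pow_smul_pow_of_lt_inv_spectralRadius {A : Type*} [NormedRing A]
    [NormedAlgebra ℂ A] [CompleteSpace A] (a : A) {z : ℂ}
    (hz : (‖z‖₊ : ℝ≥0∞) < (spectralRadius ℂ a)⁻¹) :
    HasSum (fun n => z ^ n • a ^ n) (Ring.inverse (1 - z • a)) := by
  obtain ⟨r, hzr, hr⟩ := ENNReal.lt_iff_exists_nnreal_btwn.mp hz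
  rw [ENNReal.coe_lt_coe] at hzr
  have h := ((hasFPowerSeriesOnBall_inverse_one_sub_smul ℂ a).exchange_radius
    ((differentiableOn_inverse_one_sub_smul hr).hasFPowerSeriesOnBall (pos_of_gt hzr))).hasSum
    (y := z) (by simpa [edist_zero_right, ← NNReal.coe_lt_coe] using hzr)
  simpa [ContinuousMultilinearMap.mkPiRing_apply] using h

namespace Matrix

section RankOne

variable {ι R : Type*} [Fintype ι] [CommRing R] {f : ι → R}

theorem isIdempotentElem_vecMulVec_self_s14 (hf : f ⬝ᵥ f = 1) :
    IsIdempotentElem (vecMulVec f f) := by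
  rw [IsIdempotentElem, vecMulVec_mul_vecMulVec, hf, one_smul]

theorem mul_vecMulVec_self_of_mulVec_eq_smul {A : Matrix ι ι R} {μ : R} (hA : A *ᵥ f = μ • f) :
    A * vecMulVec f f = μ • vecMulVec f f := by
  rw [mul_vecMulVec, hA, smul_vecMulVec]

variable [DecidableEq ι]

theorem one_sub_vecMulVec_self_mul_mul_vecMulVec_self (hf : f ⬝ᵥ f = 1) {A : Matrix ι ι R}
    {μ : R} (hA : A *ᵥ f = μ • f) : (1 - vecMulVec f f) * A * vecMulVec f f = 0 := by
  rw [Matrix.mul_assoc, mul_vecMulVec_self_of_mulVec_eq_smul hA, mul_smul_comm, sub_mul, one_mul,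
    (isIdempotentElem_vecMulVec_self_s14 hf).eq, sub_self, smul_zero]

theorem det_one_add_vecMulVec (u v : ι → R) : det (1 + vecMulVec u v) = 1 + v ⬝ᵥ u := by
  rw [vecMulVec_eq Unit, det_one_add_replicateCol_mul_replicateRow]

theorem det_one_add_smul_vecMulVec_self (hf : f ⬝ᵥ f = 1) (s : R) :
    det (1 + (s - 1) • vecMulVec f f) = s := by
  rw [← vecMulVec_smul, det_one_add_vecMulVec, smul_dotProduct, hf, smul_eq_mul, mul_one,
    add_sub_cancel]

theorem sub_mul_det_scalar_sub_sub_smul_vecMulVec (hf : f ⬝ᵥ f = 1) {A : Matrix ι ι R} {μ : R}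
    (hA : A *ᵥ f = μ • f) (t : R) :
    (t - μ) * det (scalar ι t - (A - μ • vecMulVec f f)) = t * det (scalar ι t - A) := by
  set P := vecMulVec f f
  have hAP : A * P = μ • P := mul_vecMulVec_self_of_mulVec_eq_smul hA
  have hPP : P * P = P := (isIdempotentElem_vecMulVec_self_s14 hf).eq
  have key : (scalar ι t - (A - μ • P)) * (1 + (t - μ - 1) • P)
      = (scalar ι t - A) * (1 + (t - 1) • P) := by
    rw [scalar_apply, ← smul_one_eq_diagonal]
    simp only [mul_add, mul_one, sub_mul, smul_mul_assoc, mul_smul_comm, one_mul, hAP, hPP]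
    module
  have := congrArg det key
  rwa [det_mul, det_mul, det_one_add_smul_vecMulVec_self hf,
    det_one_add_smul_vecMulVec_self hf, mul_comm, mul_comm (det _)] at this

open Polynomial in
theorem X_sub_C_mul_charpoly_sub_smul_vecMulVec (hf : f ⬝ᵥ f = 1) {A : Matrix ι ι R} {μ : R}
    (hA : A *ᵥ f = μ • f) :
    (X - C μ) * (A - μ • vecMulVec f f).charpoly = X * A.charpoly := by
  have hf' : (C ∘ f) ⬝ᵥ (C ∘ f) = 1 := by rw [← RingHom.map_dotProduct, hf, map_one]
  have hA' : A.map C *ᵥ (C ∘ f) = C μ • (C ∘ f) := by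
    ext i
    rw [← RingHom.map_mulVec, hA]
    simp
  have hmap : (A - μ • vecMulVec f f).map C = A.map C - C μ • vecMulVec (C ∘ f) (C ∘ f) := by
    ext i j
    simp [vecMulVec_apply]
  simpa only [charpoly, charmatrix, RingHom.mapMatrix_apply, hmap]
    using sub_mul_det_scalar_sub_sub_smul_vecMulVec hf' hA' X

theorem charpoly_one_sub_vecMulVec_self_mul {A : Matrix ι ι R} {μ : R} (hA : A *ᵥ f = μ • f) :
    ((1 - vecMulVec f f) * A).charpoly = (A - μ • vecMulVec f f).charpoly := by
  rw [charpoly_mul_comm, mul_sub, mul_one, mul_vecMulVec_self_of_mulVec_eq_smul hA]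

theorem one_sub_mul_inv_one_sub_smul {A P : Matrix ι ι R} (hQAP : (1 - P) * A * P = 0) {ρ : R}
    (hU : IsUnit (1 - ρ • A)) :
    (1 - P) * (1 - ρ • A)⁻¹ = (1 - ρ • ((1 - P) * A))⁻¹ - P := by
  have hQAQ : (1 - P) * A * (1 - P) = (1 - P) * A := by rw [mul_sub, mul_one, hQAP, sub_zero]
  have hQ : (1 - ρ • ((1 - P) * A)) * ((1 - P) * (1 - ρ • A)⁻¹) = 1 - P := by
    rw [← Matrix.mul_assoc, sub_mul, one_mul, smul_mul_assoc, hQAQ, ← mul_smul_comm, ← mul_one_sub,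
      Matrix.mul_assoc, mul_nonsing_inv _ ((isUnit_iff_isUnit_det _).mp hU), Matrix.mul_one]
  have hP : (1 - ρ • ((1 - P) * A)) * P = P := by
    rw [sub_mul, one_mul, smul_mul_assoc, hQAP, smul_zero, sub_zero]
  have hinv : (1 - ρ • ((1 - P) * A))⁻¹ = (1 - P) * (1 - ρ • A)⁻¹ + P :=
    inv_eq_right_inv (by rw [Matrix.mul_add, hQ, hP, sub_add_cancel])
  rw [hinv, add_sub_cancel_right]

theorem eq_zero_of_inv_sub_vecMulVec_mulVec_eq_zero {X : Matrix ι ι R} (hX : IsUnit X)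
    {h : ι → R} (hhf : h ⬝ᵥ f = 0) (h0 : (X⁻¹ - vecMulVec f f) *ᵥ h = 0) : h = 0 := by
  rw [sub_mulVec, vecMulVec_mulVec, dotProduct_comm, hhf] at h0
  simp only [MulOpposite.op_zero, zero_smul, sub_zero] at h0
  rw [← one_mulVec h, ← mul_nonsing_inv X ((isUnit_iff_isUnit_det X).mp hX), ← mulVec_mulVec, h0,
    mulVec_zero]

end RankOne

section Field

variable {ι K : Type*} [Fintype ι] [DecidableEq ι] [Field K]

open Polynomial in
theorem isUnit_one_sub_inv_smul_one_sub_vecMulVec_self_mul {f : ι → K} (hf : f ⬝ᵥ f = 1)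
    {A : Matrix ι ι K} {μ : K} (hA : A *ᵥ f = μ • f) (hμ : μ ≠ 0)
    (hmult : A.charpoly.rootMultiplicity μ = 1) :
    IsUnit (1 - μ⁻¹ • ((1 - vecMulVec f f) * A)) := by
  set B := (1 - vecMulVec f f) * A
  have hB : B.charpoly ≠ 0 := B.charpoly_monic.ne_zero
  have hmultB : B.charpoly.rootMultiplicity μ = 0 := by
    have h := congrArg (rootMultiplicity μ) (X_sub_C_mul_charpoly_sub_smul_vecMulVec hf hA)
    rw [← charpoly_one_sub_vecMulVec_self_mul hA,
      rootMultiplicity_mul (mul_ne_zero (X_sub_C_ne_zero μ) hB),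
      rootMultiplicity_mul (mul_ne_zero X_ne_zero A.charpoly_monic.ne_zero),
      rootMultiplicity_X_sub_C_self, hmult,
      rootMultiplicity_eq_zero (by simpa using hμ : ¬ (X : K[X]).IsRoot μ)] at h
    omega
  have hdet : (scalar ι μ - B).det ≠ 0 := by
    rw [← eval_charpoly]
    exact fun h => (rootMultiplicity_pos hB).mpr h |>.ne' hmultB
  have : 1 - μ⁻¹ • B = μ⁻¹ • (scalar ι μ - B) := by
    rw [smul_sub, scalar_apply, ← smul_one_eq_diagonal, smul_smul, inv_mul_cancel₀ hμ, one_smul]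
  rw [this, isUnit_iff_isUnit_det, det_smul, isUnit_iff_ne_zero]
  exact mul_ne_zero (pow_ne_zero _ (inv_ne_zero hμ)) hdet

theorem map_nonsing_inv {L : Type*} [Field L] (φ : K →+* L) (M : Matrix ι ι K) :
    M⁻¹.map φ = (M.map φ)⁻¹ := by
  have hdet : (M.map φ).det = φ M.det := (φ.map_det M).symm
  have hadj : (M.map φ).adjugate = M.adjugate.map φ := (φ.map_adjugate M).symm
  rw [inv_def, inv_def, hdet, hadj]
  ext i j
  simp [Ring.inverse_eq_inv']

end Field

theorem continuousAt_inv_one_sub_smul {ι K : Type*} [Fintype ι] [DecidableEq ι] [NormedField K]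
    {B : Matrix ι ι K} {c : K} (h : IsUnit (1 - c • B)) :
    ContinuousAt (fun t : K => (1 - t • B)⁻¹) c := by
  have hdet : (1 - c • B).det ≠ 0 := ((isUnit_iff_isUnit_det _).mp h).ne_zero
  have hinv : ContinuousAt Ring.inverse (1 - c • B).det := by
    rw [Ring.inverse_eq_inv']
    exact continuousAt_inv₀ hdet
  exact (continuousAt_matrix_inv _ hinv).comp (f := fun t : K => 1 - t • B) (by fun_prop)

section Real

variable {ι : Type*} [Fintype ι] [DecidableEq ι]

omit [Fintype ι] in
theorem map_ofReal_one_sub_smul (W : Matrix ι ι ℝ) (ρ : ℝ) :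
    (1 - ρ • W).map Complex.ofReal = 1 - (ρ : ℂ) • W.map Complex.ofReal := by
  ext i j
  by_cases h : i = j <;> simp [h]

theorem hasSum_pow_smul_pow_of_lt_inv_spectralRadius (W : Matrix ι ι ℝ) {ρ : ℝ}
    (hρ : (‖(ρ : ℂ)‖₊ : ℝ≥0∞) < (spectralRadius ℂ (W.map Complex.ofReal))⁻¹) :
    HasSum (fun n => ρ ^ n • W ^ n) (1 - ρ • W)⁻¹ := by
  let : NormedRing (Matrix ι ι ℂ) := Matrix.linftyOpNormedRing
  let : NormedAlgebra ℂ (Matrix ι ι ℂ) := Matrix.linftyOpNormedAlgebra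
  set φ := (Complex.ofRealHom : ℝ →+* ℂ).mapMatrix (m := ι)
  have hind : Topology.IsInducing φ := Complex.isometry_ofReal.isEmbedding.isInducing.matrix_map
  have hsmul : ∀ (c : ℝ) (M : Matrix ι ι ℝ), φ (c • M) = (c : ℂ) • φ M := fun c M => by
    ext i j
    simp [φ]
  have hterm : ∀ n, φ (ρ ^ n • W ^ n) = (ρ : ℂ) ^ n • (W.map Complex.ofReal) ^ n := fun n => by
    rw [hsmul, map_pow, Complex.ofReal_pow]
    rfl
  have hsum : φ (1 - ρ • W)⁻¹ = Ring.inverse (1 - (ρ : ℂ) • W.map Complex.ofReal) := by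
    rw [← map_ofReal_one_sub_smul, ← nonsing_inv_eq_ringInverse]
    exact map_nonsing_inv Complex.ofRealHom _
  rw [← hind.hasSum_iff, hsum, Function.comp_def]
  simp only [hterm]
  exact spectrum.hasSum_pow_smul_pow_of_lt_inv_spectralRadius _ hρ

theorem isUnit_one_sub_smul_of_lt_inv_spectralRadius (W : Matrix ι ι ℝ) {ρ : ℝ}
    (hρ : (‖(ρ : ℂ)‖₊ : ℝ≥0∞) < (spectralRadius ℂ (W.map Complex.ofReal))⁻¹) :
    IsUnit (1 - ρ • W) := by
  let : NormedRing (Matrix ι ι ℂ) := Matrix.linftyOpNormedRing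
  let : NormedAlgebra ℂ (Matrix ι ι ℂ) := Matrix.linftyOpNormedAlgebra
  have h := spectrum.isUnit_one_sub_smul_of_lt_inv_radius hρ
  have hdet : ((1 - ρ • W).map Complex.ofReal).det = ((1 - ρ • W).det : ℂ) :=
    (Complex.ofRealHom.map_det _).symm
  rw [isUnit_iff_isUnit_det, isUnit_iff_ne_zero] at h ⊢
  rw [← map_ofReal_one_sub_smul, hdet] at h
  exact_mod_cast h

end Real

end Matrix

theorem stmt14_general {n : ℕ}
    (W : Matrix (Fin n) (Fin n) ℝ)
    (lmax : ℝ) (hl : 0 < lmax)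
    (f : Fin n → ℝ) (hf : ∑ i, f i ^ 2 = 1) (hWf : W.mulVec f = lmax • f)
    (hmult : (Matrix.charpoly W).rootMultiplicity lmax = 1)
    (hdom : ∀ μ : ℂ, μ ∈ spectrum ℂ (W.map (Complex.ofReal)) → ‖μ‖ ≤ lmax) :
    (∀ ρ ∈ Set.Ico (0:ℝ) lmax⁻¹,
        HasSum (fun j : ℕ => ρ ^ j • W ^ j) (1 - ρ • W)⁻¹ ∧
        (1 - Matrix.vecMulVec f f) * (1 - ρ • W)⁻¹
          = (1 - ρ • ((1 - Matrix.vecMulVec f f) * W))⁻¹ - Matrix.vecMulVec f f) ∧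
    IsUnit (1 - lmax⁻¹ • ((1 - Matrix.vecMulVec f f) * W)) ∧
    Tendsto (fun ρ => (1 - Matrix.vecMulVec f f) * (1 - ρ • W)⁻¹)
      (nhdsWithin lmax⁻¹ (Set.Ico 0 lmax⁻¹))
      (nhds ((1 - lmax⁻¹ • ((1 - Matrix.vecMulVec f f) * W))⁻¹ - Matrix.vecMulVec f f)) ∧
    (∀ h : Fin n → ℝ, h ⬝ᵥ f = 0 →
      ((1 - lmax⁻¹ • ((1 - Matrix.vecMulVec f f) * W))⁻¹ - Matrix.vecMulVec f f).mulVec h = 0 →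
      h = 0) := by
  have hff : f ⬝ᵥ f = 1 := by simpa [dotProduct, sq] using hf
  have hX := isUnit_one_sub_inv_smul_one_sub_vecMulVec_self_mul hff hWf hl.ne' hmult
  have hsr : ∀ ρ ∈ Ico (0 : ℝ) lmax⁻¹,
      (‖(ρ : ℂ)‖₊ : ℝ≥0∞) < (spectralRadius ℂ (W.map Complex.ofReal))⁻¹ := fun ρ hρ =>
    spectrum.nnnorm_lt_inv_spectralRadius_of_forall_norm_le hl hdom
      (by simpa [abs_of_nonneg hρ.1] using hρ.2)
  have hres : ∀ ρ ∈ Ico (0 : ℝ) lmax⁻¹, (1 - vecMulVec f f) * (1 - ρ • W)⁻¹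
      = (1 - ρ • ((1 - vecMulVec f f) * W))⁻¹ - vecMulVec f f := fun ρ hρ =>
    one_sub_mul_inv_one_sub_smul (one_sub_vecMulVec_self_mul_mul_vecMulVec_self hff hWf)
      (isUnit_one_sub_smul_of_lt_inv_spectralRadius W (hsr ρ hρ))
  refine ⟨fun ρ hρ => ⟨hasSum_pow_smul_pow_of_lt_inv_spectralRadius W (hsr ρ hρ), hres ρ hρ⟩,
    hX, ?_, fun h hhf hΛ => eq_zero_of_inv_sub_vecMulVec_mulVec_eq_zero hX hhf hΛ⟩
  refine (((continuousAt_inv_one_sub_smul hX).tendsto.mono_left nhdsWithin_le_nhds).sub_const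
    _).congr' ?_
  filter_upwards [self_mem_nhdsWithin] with ρ hρ using (hres ρ hρ).symm

/-- Lemma SARL (key computations): for `ρ ∈ [0, λmax⁻¹)` the matrix `(I - ρW)⁻¹` equals the
norm-convergent Neumann series `∑ ρʲ Wʲ`, and
`Π_{f⊥}(I-ρW)⁻¹ = (I - ρ Π_{f⊥} W)⁻¹ - Π_f` where `Π_f = f fᵀ`; moreover
`I - λmax⁻¹ Π_{f⊥} W` is invertible and `Π_{f⊥}(I-ρW)⁻¹` converges, as `ρ → λmax⁻¹`, to
`Λ = (I - λmax⁻¹ Π_{f⊥} W)⁻¹ - Π_f`, which is injective on `span(f)⊥`. -/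
theorem stmt14 {n : ℕ} (hn : 2 ≤ n)
    (W : Matrix (Fin n) (Fin n) ℝ) (hdiag : ∀ i, W i i = 0)
    (lmax : ℝ) (hl : 0 < lmax)
    (f : Fin n → ℝ) (hf : ∑ i, f i ^ 2 = 1) (hWf : W.mulVec f = lmax • f)
    (hmult : (Matrix.charpoly W).rootMultiplicity lmax = 1)
    (hdom : ∀ μ : ℂ, μ ∈ spectrum ℂ (W.map (Complex.ofReal)) → ‖μ‖ ≤ lmax) :
    (∀ ρ ∈ Set.Ico (0:ℝ) lmax⁻¹,
        HasSum (fun j : ℕ => ρ ^ j • W ^ j) (1 - ρ • W)⁻¹ ∧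
        (1 - Matrix.vecMulVec f f) * (1 - ρ • W)⁻¹
          = (1 - ρ • ((1 - Matrix.vecMulVec f f) * W))⁻¹ - Matrix.vecMulVec f f) ∧
    IsUnit (1 - lmax⁻¹ • ((1 - Matrix.vecMulVec f f) * W)) ∧
    Tendsto (fun ρ => (1 - Matrix.vecMulVec f f) * (1 - ρ • W)⁻¹)
      (nhdsWithin lmax⁻¹ (Set.Ico 0 lmax⁻¹))
      (nhds ((1 - lmax⁻¹ • ((1 - Matrix.vecMulVec f f) * W))⁻¹ - Matrix.vecMulVec f f)) ∧
    (∀ h : Fin n → ℝ, h ⬝ᵥ f = 0 →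
      ((1 - lmax⁻¹ • ((1 - Matrix.vecMulVec f f) * W))⁻¹ - Matrix.vecMulVec f f).mulVec h = 0 →
      h = 0) :=
  stmt14_general W lmax hl f hf hWf hmult hdom
end

section
/- Let $W$ be a matrix as in the SEM assumptions with dominant eigenvalue $\lambda_{\max}$ (algebraic multiplicity one) and normalized eigenvector $f_{\max}$, and let $X \in \mathbb{R}^{n\times k}$ ($n > k$) be such that $\mathrm{span}(X)^{\perp} \subseteq \mathrm{Eig}(W', \lambda)$ for some real eigenvalue $\lambda$ of $W'$. Then for every $0 \leq \rho < \lambda_{\max}^{-1}$: $\Pi_{\mathrm{span}(X)^{\perp}} (I_n - \rho W)^{-1} = (1 - \rho\lambda)^{-1} \Pi_{\mathrm{span}(X)^{\perp}}$, and $C_X \Sigma_{SEM}(\rho) C_X' = (1 - \rho\lambda)^{-2} I_{n-k}$, where $\Sigma_{SEM}(\rho) = [(I_n - \rho W')(I_n - \rho W)]^{-1}$. -/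
/-!
The rows of `C` lie in `span(X)⊥`, so they are left eigenvectors of `W` for `λ`: `C W = λ C`, hence
`C (I - ρW) = (1 - ρλ) C`. Every real eigenvalue `μ` of `W` has `ρ μ ≤ ρ λ_max < 1`, so `I - ρW` is
invertible and `C (I - ρW)⁻¹ = (1 - ρλ)⁻¹ C`. Multiplying by `C'` on the left gives the first identity;
the second follows from `Σ_SEM(ρ) = (I - ρW)⁻¹ ((I - ρW)⁻¹)'` and `C C' = I`.
-/

open Matrix Set

namespace Matrix

variable {ι κ : Type*} [Fintype ι]

theorem ofReal_mem_spectrum_map_ofReal_iff [DecidableEq ι] {M : Matrix ι ι ℝ} {μ : ℝ} :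
    (μ : ℂ) ∈ spectrum ℂ (M.map Complex.ofReal) ↔ μ ∈ spectrum ℝ M := by
  rw [mem_spectrum_iff_isRoot_charpoly, mem_spectrum_iff_isRoot_charpoly,
    show M.map Complex.ofReal = M.map Complex.ofRealHom from rfl, charpoly_map]
  exact Polynomial.isRoot_map_iff (f := Complex.ofRealHom) Complex.ofReal_injective

theorem isUnit_one_sub_smul_of_forall_mem_spectrum {K A : Type*} [Field K] [Ring A] [Algebra K A]
    {a : A} {ρ : K} (h : ∀ μ ∈ spectrum K a, ρ * μ ≠ 1) : IsUnit (1 - ρ • a) := by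
  rcases eq_or_ne ρ 0 with rfl | hρ
  · simp
  have hunit : IsUnit (algebraMap K A ρ⁻¹ - a) :=
    spectrum.notMem_iff.mp fun hmem => h _ hmem (mul_inv_cancel₀ hρ)
  have : 1 - ρ • a = ρ • (algebraMap K A ρ⁻¹ - a) := by
    rw [smul_sub, Algebra.algebraMap_eq_smul_one, smul_smul, mul_inv_cancel₀ hρ, one_smul]
  rw [this]
  exact hunit.smul (Units.mk0 ρ hρ)

theorem mul_eq_smul_of_forall_vecMul {R : Type*} [CommSemiring R] {C : Matrix κ ι R}
    {M : Matrix ι ι R} {c : R} (h : ∀ i, C i ᵥ* M = c • C i) : C * M = c • C := by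
  ext i j
  exact congrFun (h i) j

theorem mulVec_eq_zero_of_mul_mulVec_eq_zero {R : Type*} [CommSemiring R] [Fintype κ] [DecidableEq κ]
    {C : Matrix κ ι R} {D : Matrix ι κ R} (hCD : C * D = 1) {v : ι → R}
    (hv : (D * C) *ᵥ v = 0) : C *ᵥ v = 0 := by
  rw [← Matrix.one_mulVec (C *ᵥ v), ← hCD, ← mulVec_mulVec, mulVec_mulVec _ D, hv, mulVec_zero]

theorem mul_inv_eq_smul_of_mul_eq_smul [DecidableEq ι] {K : Type*} [Field K] {C : Matrix κ ι K}
    {A : Matrix ι ι K} (hA : IsUnit A) {c : K} (h : C * A = c • C) : C * A⁻¹ = c⁻¹ • C := by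
  rcases eq_or_ne c 0 with rfl | hc
  · have hC : C = 0 := by
      rw [← Matrix.mul_nonsing_inv_cancel_right A C ((isUnit_iff_isUnit_det A).mp hA), h,
        zero_smul, Matrix.zero_mul]
    simp [hC]
  · rw [← smul_right_inj hc, smul_smul, mul_inv_cancel₀ hc, one_smul, ← smul_mul, ← h,
      Matrix.mul_nonsing_inv_cancel_right A C ((isUnit_iff_isUnit_det A).mp hA)]

theorem mul_mul_transpose_mul_transpose_of_mul_eq_smul {R : Type*} [CommSemiring R] [Fintype κ]
    {C : Matrix κ ι R} {B : Matrix ι ι R} {a : R} (h : C * B = a • C) :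
    C * (B * Bᵀ) * Cᵀ = a ^ 2 • (C * Cᵀ) := by
  calc C * (B * Bᵀ) * Cᵀ = (C * B) * (C * B)ᵀ := by
        rw [transpose_mul, Matrix.mul_assoc, Matrix.mul_assoc, Matrix.mul_assoc]
    _ = a ^ 2 • (C * Cᵀ) := by
        rw [h, transpose_smul, Matrix.smul_mul, Matrix.mul_smul, smul_smul, sq]

end Matrix

theorem stmt15_general {n k : ℕ}
    (W : Matrix (Fin n) (Fin n) ℝ)
    (lmax : ℝ)
    (hdom : ∀ μ : ℂ, μ ∈ spectrum ℂ (W.map (Complex.ofReal)) → ‖μ‖ ≤ lmax)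
    (X : Matrix (Fin n) (Fin k) ℝ)
    (C : Matrix (Fin (n - k)) (Fin n) ℝ)
    (hC1 : C * Cᵀ = 1)
    (hC2 : ∀ v : Fin n → ℝ, (Cᵀ * C).mulVec v = 0 ↔ v ∈ Set.range X.mulVec)
    (lam : ℝ)
    (heig : ∀ v : Fin n → ℝ, (∀ w ∈ Set.range X.mulVec, v ⬝ᵥ w = 0) →
      Wᵀ.mulVec v = lam • v) :
    ∀ ρ ∈ Set.Ico (0:ℝ) lmax⁻¹,
      (Cᵀ * C) * (1 - ρ • W)⁻¹ = (1 - ρ * lam)⁻¹ • (Cᵀ * C) ∧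
      C * ((1 - ρ • W)ᵀ * (1 - ρ • W))⁻¹ * Cᵀ
        = ((1 - ρ * lam) ^ 2)⁻¹ • (1 : Matrix (Fin (n - k)) (Fin (n - k)) ℝ) := by
  rintro ρ ⟨hρ0, hρ1⟩
  have hl : 0 < lmax := inv_pos.mp (hρ0.trans_lt hρ1)
  have hA : IsUnit (1 - ρ • W) := by
    refine isUnit_one_sub_smul_of_forall_mem_spectrum fun μ hμ => ne_of_lt ?_
    have hμ : |μ| ≤ lmax := by simpa using hdom μ (ofReal_mem_spectrum_map_ofReal_iff.mpr hμ)
    calc ρ * μ ≤ ρ * lmax := mul_le_mul_of_nonneg_left ((le_abs_self μ).trans hμ) hρ0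
      _ < 1 := by rwa [← lt_inv_mul_iff₀' hl, mul_one]
  have hCX : ∀ w ∈ range X.mulVec, C *ᵥ w = 0 := fun w hw =>
    mulVec_eq_zero_of_mul_mulVec_eq_zero hC1 ((hC2 w).mpr hw)
  have hCW : C * W = lam • C := mul_eq_smul_of_forall_vecMul fun i => by
    rw [← mulVec_transpose]
    exact heig (C i) fun w hw => congrFun (hCX w hw) i
  have hCA : C * (1 - ρ • W)⁻¹ = (1 - ρ * lam)⁻¹ • C := by
    refine mul_inv_eq_smul_of_mul_eq_smul hA ?_
    rw [Matrix.mul_sub, Matrix.mul_one, Matrix.mul_smul, hCW, smul_smul, sub_smul, one_smul]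
  refine ⟨by rw [Matrix.mul_assoc, hCA, Matrix.mul_smul], ?_⟩
  rw [Matrix.mul_inv_rev, ← transpose_nonsing_inv,
    mul_mul_transpose_mul_transpose_of_mul_eq_smul hCA, hC1, inv_pow]

/-- Lemma SEMID: if `span(X)⊥ ⊆ Eig(W', λ)` then
`Π_{span(X)⊥}(I - ρW)⁻¹ = (1-ρλ)⁻¹ Π_{span(X)⊥}` and
`C_X Σ_SEM(ρ) C_X' = (1-ρλ)⁻² I` for every `ρ ∈ [0, λmax⁻¹)`, where
`Σ_SEM(ρ) = [(I-ρW')(I-ρW)]⁻¹`. -/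
theorem stmt15 {n k : ℕ} (hn : 2 ≤ n) (hk : k < n)
    (W : Matrix (Fin n) (Fin n) ℝ) (hdiag : ∀ i, W i i = 0)
    (lmax : ℝ) (hl : 0 < lmax)
    (f : Fin n → ℝ) (hf : ∑ i, f i ^ 2 = 1) (hWf : W.mulVec f = lmax • f)
    (hmult : (Matrix.charpoly W).rootMultiplicity lmax = 1)
    (hdom : ∀ μ : ℂ, μ ∈ spectrum ℂ (W.map (Complex.ofReal)) → ‖μ‖ ≤ lmax)
    (X : Matrix (Fin n) (Fin k) ℝ) (hX : X.rank = k)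
    (C : Matrix (Fin (n - k)) (Fin n) ℝ)
    (hC1 : C * Cᵀ = 1)
    (hC2 : ∀ v : Fin n → ℝ, (Cᵀ * C).mulVec v = 0 ↔ v ∈ Set.range X.mulVec)
    (lam : ℝ) (hlam : ∃ v ≠ 0, Wᵀ.mulVec v = lam • v)
    (heig : ∀ v : Fin n → ℝ, (∀ w ∈ Set.range X.mulVec, v ⬝ᵥ w = 0) →
      Wᵀ.mulVec v = lam • v) :
    ∀ ρ ∈ Set.Ico (0:ℝ) lmax⁻¹,
      (Cᵀ * C) * (1 - ρ • W)⁻¹ = (1 - ρ * lam)⁻¹ • (Cᵀ * C) ∧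
      C * ((1 - ρ • W)ᵀ * (1 - ρ • W))⁻¹ * Cᵀ
        = ((1 - ρ * lam) ^ 2)⁻¹ • (1 : Matrix (Fin (n - k)) (Fin (n - k)) ℝ) :=
  stmt15_general W lmax hdom X C hC1 hC2 lam heig
end
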